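/- arXiv:2501.00109 — 5 statements merged into one kernel-verified Lean document; each statement's English description precedes it below -/
import Mathlib

section
/- Let ν ≥ 0 and γ > 0. Then there exists a constant C > 0 such that for all x > 0 one has 0 < K_ν(x) ≤ C (1 + x^{-(ν+γ)}) e^{-x}. -/
/-!
Bound `cosh (ν t) ≤ e^{ν t}` and write the integrand as
`e^{-x} · (e^{-x (cosh t - 1)} e^{(ν+γ) t}) · e^{-γ t}`. The middle factor is bounded uniformly
in `t` by `4^{ν+γ} + (4(ν+γ))^{ν+γ} x^{-(ν+γ)}`: trivially while `e^t ≤ 4`, and beyond that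
because `cosh t - 1 ≥ e^t / 4` and `u^s e^{-a u} ≤ (s / a)^s`. Integrating `e^{-γ t}` over
`t > 0` gives the factor `1 / γ`.
-/

open Real Set MeasureTheory

/-- The modified Bessel function of the second kind,
`K_ν(x) = ∫₀^∞ exp(−x cosh t) cosh(ν t) dt`. -/
noncomputable def besselK (ν x : ℝ) : ℝ :=
  ∫ t in Set.Ioi (0:ℝ), Real.exp (-x * Real.cosh t) * Real.cosh (ν * t)

namespace Real

lemma rpow_mul_exp_neg_mul_le {s a u : ℝ} (hs : 0 < s) (ha : 0 < a) (hu : 0 ≤ u) :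
    u ^ s * exp (-(a * u)) ≤ (s / a) ^ s := by
  have hlinear : u ≤ s / a * exp (a * u / s) := by
    rw [div_mul_eq_mul_div, le_div_iff₀ ha]
    have := add_one_le_exp (a * u / s)
    rw [div_add_one hs.ne', div_le_iff₀ hs] at this
    nlinarith [exp_pos (a * u / s)]
  have hpow : u ^ s ≤ (s / a) ^ s * exp (a * u) := by
    calc u ^ s ≤ (s / a * exp (a * u / s)) ^ s := rpow_le_rpow hu hlinear hs.le
      _ = (s / a) ^ s * exp (a * u) := by
        rw [mul_rpow (by positivity) (exp_pos _).le, ← exp_mul, div_mul_cancel₀ _ hs.ne']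
  rw [exp_neg, ← div_eq_mul_inv, div_le_iff₀ (exp_pos _)]
  exact hpow

lemma cosh_le_exp_of_nonneg {y : ℝ} (hy : 0 ≤ y) : cosh y ≤ exp y := by
  rw [cosh_eq]
  linarith [exp_le_exp.mpr (show -y ≤ y by linarith)]

lemma exp_div_four_le_cosh_sub_one {t : ℝ} (ht : 4 ≤ exp t) : exp t / 4 ≤ cosh t - 1 := by
  rw [cosh_eq]
  linarith [exp_pos (-t)]

end Real

lemma exp_neg_mul_cosh_sub_one_mul_exp_le {x s : ℝ} (hx : 0 < x) (hs : 0 < s) (t : ℝ) :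
    exp (-(x * (cosh t - 1))) * exp (s * t) ≤ 4 ^ s + (4 * s) ^ s * x ^ (-s) := by
  have hexp_st : exp (s * t) = exp t ^ s := by rw [← exp_mul, mul_comm]
  have htail : 0 ≤ (4 * s) ^ s * x ^ (-s) := by positivity
  rcases le_total (exp t) 4 with hsmall | hlarge
  · have hdecay : exp (-(x * (cosh t - 1))) ≤ 1 :=
      exp_le_one_iff.mpr (by nlinarith [one_le_cosh t])
    have hgrowth : exp (s * t) ≤ 4 ^ s := hexp_st ▸ rpow_le_rpow (exp_pos t).le hsmall hs.le
    nlinarith [exp_pos (-(x * (cosh t - 1))), exp_pos (s * t)]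
  · have hdecay : exp (-(x * (cosh t - 1))) ≤ exp (-(x / 4 * exp t)) :=
      exp_le_exp.mpr (by nlinarith [exp_div_four_le_cosh_sub_one hlarge])
    calc exp (-(x * (cosh t - 1))) * exp (s * t)
        ≤ exp t ^ s * exp (-(x / 4 * exp t)) := by
          rw [hexp_st, mul_comm]; gcongr
      _ ≤ (s / (x / 4)) ^ s := rpow_mul_exp_neg_mul_le hs (by positivity) (exp_pos t).le
      _ = (4 * s) ^ s * x ^ (-s) := by
          rw [div_div_eq_mul_div, mul_comm s, div_rpow (by positivity) hx.le, rpow_neg hx.le,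
            div_eq_mul_inv]
      _ ≤ 4 ^ s + (4 * s) ^ s * x ^ (-s) := le_add_of_nonneg_left (by positivity)

lemma exp_neg_mul_cosh_mul_cosh_le {ν γ x t : ℝ} (hν : 0 ≤ ν) (hγ : 0 < γ) (hx : 0 < x)
    (ht : 0 ≤ t) :
    exp (-x * cosh t) * cosh (ν * t) ≤
      exp (-x) * (4 ^ (ν + γ) + (4 * (ν + γ)) ^ (ν + γ) * x ^ (-(ν + γ))) *
        exp (-γ * t) := by
  have hsplit : exp (-x * cosh t) * exp (ν * t) =
      exp (-x) * (exp (-(x * (cosh t - 1))) * exp ((ν + γ) * t)) * exp (-γ * t) := by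
    simp only [← exp_add]; ring_nf
  calc exp (-x * cosh t) * cosh (ν * t) ≤ exp (-x * cosh t) * exp (ν * t) := by
        gcongr; exact cosh_le_exp_of_nonneg (by positivity)
    _ = _ := hsplit
    _ ≤ _ := by
        gcongr
        exact exp_neg_mul_cosh_sub_one_mul_exp_le hx (by positivity) t

lemma integrableOn_exp_neg_mul_cosh_mul_cosh {ν x : ℝ} (hν : 0 ≤ ν) (hx : 0 < x) :
    IntegrableOn (fun t => exp (-x * cosh t) * cosh (ν * t)) (Ioi 0) := by
  refine Integrable.mono' ((integrableOn_exp_mul_Ioi (neg_lt_zero.mpr one_pos) 0).const_mul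
    (exp (-x) * (4 ^ (ν + 1) + (4 * (ν + 1)) ^ (ν + 1) * x ^ (-(ν + 1))))) (by fun_prop) ?_
  filter_upwards [ae_restrict_mem measurableSet_Ioi] with t ht
  rw [norm_of_nonneg (by positivity)]
  exact exp_neg_mul_cosh_mul_cosh_le hν one_pos hx (le_of_lt ht)

lemma besselK_pos {ν x : ℝ} (hν : 0 ≤ ν) (hx : 0 < x) : 0 < besselK ν x := by
  rw [besselK, setIntegral_pos_iff_support_of_nonneg_ae
    (ae_of_all _ fun t => by positivity) (integrableOn_exp_neg_mul_cosh_mul_cosh hν hx)]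
  have hsupport : Function.support (fun t => exp (-x * cosh t) * cosh (ν * t)) = univ :=
    Function.support_eq_univ fun t => by positivity
  rw [hsupport, univ_inter, Real.volume_Ioi]
  exact ENNReal.zero_lt_top

lemma besselK_le {ν γ x : ℝ} (hν : 0 ≤ ν) (hγ : 0 < γ) (hx : 0 < x) :
    besselK ν x ≤
      exp (-x) * (4 ^ (ν + γ) + (4 * (ν + γ)) ^ (ν + γ) * x ^ (-(ν + γ))) / γ := by
  have hexp_int : IntegrableOn (fun t => exp (-γ * t)) (Ioi 0) :=
    integrableOn_exp_mul_Ioi (neg_lt_zero.mpr hγ) 0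
  calc besselK ν x
      ≤ ∫ t in Ioi (0 : ℝ), exp (-x) *
          (4 ^ (ν + γ) + (4 * (ν + γ)) ^ (ν + γ) * x ^ (-(ν + γ))) * exp (-γ * t) :=
        setIntegral_mono_on (integrableOn_exp_neg_mul_cosh_mul_cosh hν hx)
          (hexp_int.const_mul _) measurableSet_Ioi
          fun t ht => exp_neg_mul_cosh_mul_cosh_le hν hγ hx (le_of_lt ht)
    _ = _ := by
        rw [integral_const_mul, integral_exp_mul_Ioi (neg_lt_zero.mpr hγ)]
        field_simp
        simp

theorem stmt_0 (ν γ : ℝ) (hν : 0 ≤ ν) (hγ : 0 < γ) :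
    ∃ C : ℝ, 0 < C ∧ ∀ x : ℝ, 0 < x →
      0 < besselK ν x ∧ besselK ν x ≤ C * (1 + x ^ (-(ν + γ))) * Real.exp (-x) := by
  set s := ν + γ
  refine ⟨(4 ^ s + (4 * s) ^ s) / γ, by positivity, fun x hx => ⟨besselK_pos hν hx, ?_⟩⟩
  have hpow : 0 ≤ x ^ (-s) := by positivity
  calc besselK ν x ≤ exp (-x) * (4 ^ s + (4 * s) ^ s * x ^ (-s)) / γ := besselK_le hν hγ hx
    _ ≤ (4 ^ s + (4 * s) ^ s) / γ * (1 + x ^ (-s)) * exp (-x) := by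
        rw [div_mul_eq_mul_div, div_mul_eq_mul_div, mul_comm (exp (-x))]
        gcongr
        nlinarith [rpow_pos_of_pos (by norm_num : (0:ℝ) < 4) s,
          rpow_nonneg (by positivity : (0:ℝ) ≤ 4 * s) s]
end

section
/- The function g is smooth on (1,∞) with g'(t) = (√(t²−1) − arccos(1/t)) / (t²−1)^{3/2} and g''(t) = (3t·arccos(1/t) − √(1−1/t²) − 2t·√(t²−1)) / (t²−1)^{5/2}. Moreover g' is positive and strictly decreasing on (1,∞), g'' is negative and strictly increasing on (1,∞), g'(t) → 0 and g''(t) → 0 as t → ∞, and g(t) → 1, g'(t) → 1/3, g''(t) → −2/5 as t → 1⁺; in particular |g'| ≤ 1/3 and |g''| ≤ 2/5 on (1,∞). -/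
open Real Set Filter
open Topology

/-- `g(t) = arccos(1/t) / √(1 − 1/t²)`. -/
noncomputable def gFun (t : ℝ) : ℝ := Real.arccos (1/t) / Real.sqrt (1 - 1/t^2)

/-- The claimed formula for `g'`. -/
noncomputable def gFun' (t : ℝ) : ℝ :=
  (Real.sqrt (t^2 - 1) - Real.arccos (1/t)) / (t^2 - 1) ^ ((3:ℝ)/2)

/-- The claimed formula for `g''`. -/
noncomputable def gFun'' (t : ℝ) : ℝ :=
  (3*t*Real.arccos (1/t) - Real.sqrt (1 - 1/t^2) - 2*t*Real.sqrt (t^2 - 1))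
    / (t^2 - 1) ^ ((5:ℝ)/2)

private lemma pos_of_deriv_pos {f f' : ℝ → ℝ} (hd : ∀ x, HasDerivAt f (f' x) x)
    (hp : ∀ x, 0 < x → 0 < f' x) (h0 : f 0 = 0) {x : ℝ} (hx : 0 < x) : 0 < f x := by
  have hmono : StrictMonoOn f (Set.Ici 0) := by
    apply strictMonoOn_of_deriv_pos (convex_Ici 0)
    · exact fun y _ => (hd y).differentiableAt.continuousAt.continuousWithinAt
    · intro y hy
      rw [interior_Ici] at hy
      rw [(hd y).deriv]
      exact hp y hy
  have := hmono Set.self_mem_Ici (Set.mem_Ici.2 hx.le) hx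
  rwa [h0] at this

lemma ineqL1' {x : ℝ} (hx : 0 < x) : Real.arctan x < x := by
  have h : ∀ y : ℝ, HasDerivAt (fun z => z - Real.arctan z) (1 - 1/(1+y^2)) y :=
    fun y => (hasDerivAt_id y).sub (Real.hasDerivAt_arctan y)
  have := pos_of_deriv_pos h (fun y hy => by
      have h1 : (0:ℝ) < 1 + y^2 := by positivity
      rw [sub_pos, div_lt_one h1]; nlinarith) (by simp) hx
  linarith

lemma ineqL2' {x : ℝ} (hx : 0 < x) : 3*x - x^3 < 3*Real.arctan x := by
  have h : ∀ y : ℝ, HasDerivAt (fun z => 3*Real.arctan z - (3*z - z^3)) (3/(1+y^2) - (3 - 3*y^2)) y := by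
    intro y
    have h1 : HasDerivAt (fun z : ℝ => 3*Real.arctan z) (3 * (1/(1+y^2))) y :=
      (Real.hasDerivAt_arctan y).const_mul 3
    have h2 : HasDerivAt (fun z : ℝ => 3*z - z^3) (3 - 3*y^2) y := by
      have := ((hasDerivAt_id y).const_mul 3).sub (hasDerivAt_pow 3 y)
      refine this.congr_deriv ?_; push_cast; ring
    refine (h1.sub h2).congr_deriv ?_; ring
  have := pos_of_deriv_pos h (fun y hy => by
      have h1 : (0:ℝ) < 1 + y^2 := by positivity
      have : 3/(1+y^2) - (3 - 3*y^2) = 3*y^4/(1+y^2) := by field_simp; ring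
      rw [this]; positivity) (by simp) hx
  linarith

lemma ineqL3' {x : ℝ} (hx : 0 < x) : 15*Real.arctan x < 15*x - 5*x^3 + 3*x^5 := by
  have h : ∀ y : ℝ, HasDerivAt (fun z => (15*z - 5*z^3 + 3*z^5) - 15*Real.arctan z)
      ((15 - 15*y^2 + 15*y^4) - 15/(1+y^2)) y := by
    intro y
    have h2 : HasDerivAt (fun z : ℝ => 15*z - 5*z^3 + 3*z^5) (15 - 15*y^2 + 15*y^4) y := by
      have := (((hasDerivAt_id y).const_mul 15).sub ((hasDerivAt_pow 3 y).const_mul 5)).add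
        ((hasDerivAt_pow 5 y).const_mul 3)
      refine this.congr_deriv ?_; push_cast; ring
    have h1 : HasDerivAt (fun z : ℝ => 15*Real.arctan z) (15 * (1/(1+y^2))) y :=
      (Real.hasDerivAt_arctan y).const_mul 15
    refine (h2.sub h1).congr_deriv ?_; ring
  have := pos_of_deriv_pos h (fun y hy => by
      have h1 : (0:ℝ) < 1 + y^2 := by positivity
      have : (15 - 15*y^2 + 15*y^4) - 15/(1+y^2) = 15*y^6/(1+y^2) := by field_simp; ring
      rw [this]; positivity) (by simp) hx
  linarith

lemma ineqL4' {x : ℝ} (hx : 0 < x) : 105*x - 35*x^3 + 21*x^5 - 15*x^7 < 105*Real.arctan x := by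
  have h : ∀ y : ℝ, HasDerivAt (fun z => 105*Real.arctan z - (105*z - 35*z^3 + 21*z^5 - 15*z^7))
      (105/(1+y^2) - (105 - 105*y^2 + 105*y^4 - 105*y^6)) y := by
    intro y
    have h2 : HasDerivAt (fun z : ℝ => 105*z - 35*z^3 + 21*z^5 - 15*z^7)
        (105 - 105*y^2 + 105*y^4 - 105*y^6) y := by
      have := ((((hasDerivAt_id y).const_mul 105).sub ((hasDerivAt_pow 3 y).const_mul 35)).add
        ((hasDerivAt_pow 5 y).const_mul 21)).sub ((hasDerivAt_pow 7 y).const_mul 15)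
      refine this.congr_deriv ?_; push_cast; ring
    have h1 : HasDerivAt (fun z : ℝ => 105*Real.arctan z) (105 * (1/(1+y^2))) y :=
      (Real.hasDerivAt_arctan y).const_mul 105
    refine (h1.sub h2).congr_deriv ?_; ring
  have := pos_of_deriv_pos h (fun y hy => by
      have h1 : (0:ℝ) < 1 + y^2 := by positivity
      have : 105/(1+y^2) - (105 - 105*y^2 + 105*y^4 - 105*y^6) = 105*y^8/(1+y^2) := by
        field_simp; ring
      rw [this]; positivity) (by simp) hx
  linarith

lemma ineqL5' {x : ℝ} (hx : 0 < x) : 3*(1+x^2)*Real.arctan x < x*(2*x^2+3) := by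
  have h : ∀ y : ℝ, HasDerivAt (fun z => (2*z^3+3*z)/(3+3*z^2) - Real.arctan z)
      (((6*y^2+3)*(3+3*y^2) - (2*y^3+3*y)*(6*y))/(3+3*y^2)^2 - 1/(1+y^2)) y := by
    intro y
    have hN : HasDerivAt (fun z : ℝ => 2*z^3+3*z) (6*y^2+3) y := by
      have := ((hasDerivAt_pow 3 y).const_mul 2).add ((hasDerivAt_id y).const_mul 3)
      refine this.congr_deriv ?_; push_cast; ring
    have hD : HasDerivAt (fun z : ℝ => 3+3*z^2) (6*y) y := by
      have := ((hasDerivAt_pow 2 y).const_mul 3).const_add 3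
      refine this.congr_deriv ?_; push_cast; ring
    exact (hN.div hD (by positivity)).sub (Real.hasDerivAt_arctan y)
  have key := pos_of_deriv_pos h (fun y hy => by
      have h1 : (0:ℝ) < 1 + y^2 := by positivity
      have : ((6*y^2+3)*(3+3*y^2) - (2*y^3+3*y)*(6*y))/(3+3*y^2)^2 - 1/(1+y^2)
          = 2*y^4/(3*(1+y^2)^2) := by field_simp; ring
      rw [this]; positivity) (by norm_num) hx
  rw [sub_pos, lt_div_iff₀ (by positivity : (0:ℝ) < 3+3*x^2)] at key
  nlinarith [key]

lemma ineqL6' {x : ℝ} (hx : 0 < x) :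
    3*(4*x^2+5)*(1+x^2)*Real.arctan x < x*(6*x^4+22*x^2+15) := by
  have h : ∀ y : ℝ, HasDerivAt (fun z => (6*z^5+22*z^3+15*z)/(12*z^4+27*z^2+15) - Real.arctan z)
      (((30*y^4+66*y^2+15)*(12*y^4+27*y^2+15) - (6*y^5+22*y^3+15*y)*(48*y^3+54*y))/(12*y^4+27*y^2+15)^2
        - 1/(1+y^2)) y := by
    intro y
    have hN : HasDerivAt (fun z : ℝ => 6*z^5+22*z^3+15*z) (30*y^4+66*y^2+15) y := by
      have := (((hasDerivAt_pow 5 y).const_mul 6).add ((hasDerivAt_pow 3 y).const_mul 22)).add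
        ((hasDerivAt_id y).const_mul 15)
      refine this.congr_deriv ?_; push_cast; ring
    have hD : HasDerivAt (fun z : ℝ => 12*z^4+27*z^2+15) (48*y^3+54*y) y := by
      have := (((hasDerivAt_pow 4 y).const_mul 12).add ((hasDerivAt_pow 2 y).const_mul 27)).add_const 15
      refine this.congr_deriv ?_; push_cast; ring
    exact (hN.div hD (by positivity)).sub (Real.hasDerivAt_arctan y)
  have key := pos_of_deriv_pos h (fun y hy => by
      have h1 : (0:ℝ) < 1 + y^2 := by positivity
      have h2 : (0:ℝ) < 12*y^4+27*y^2+15 := by positivity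
      have : ((30*y^4+66*y^2+15)*(12*y^4+27*y^2+15) - (6*y^5+22*y^3+15*y)*(48*y^3+54*y))/(12*y^4+27*y^2+15)^2
          - 1/(1+y^2) = (78*y^6+72*y^8)/((12*y^4+27*y^2+15)^2*(1+y^2)) * (1+y^2) := by
        field_simp; ring
      rw [this]; positivity) (by norm_num) hx
  rw [sub_pos, lt_div_iff₀ (by positivity : (0:ℝ) < 12*x^4+27*x^2+15)] at key
  nlinarith [key]

lemma ineqL7' {x : ℝ} (hx : 0 < x) : 15*x + 10*x^3 - 2*x^5 < 15*(1+x^2)*Real.arctan x := by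
  have h : ∀ y : ℝ, HasDerivAt (fun z => Real.arctan z - (15*z+10*z^3-2*z^5)/(15+15*z^2))
      (1/(1+y^2) - ((15+30*y^2-10*y^4)*(15+15*y^2) - (15*y+10*y^3-2*y^5)*(30*y))/(15+15*y^2)^2) y := by
    intro y
    have hN : HasDerivAt (fun z : ℝ => 15*z+10*z^3-2*z^5) (15+30*y^2-10*y^4) y := by
      have := (((hasDerivAt_id y).const_mul 15).add ((hasDerivAt_pow 3 y).const_mul 10)).sub
        ((hasDerivAt_pow 5 y).const_mul 2)
      refine this.congr_deriv ?_; push_cast; ring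
    have hD : HasDerivAt (fun z : ℝ => 15+15*z^2) (30*y) y := by
      have := ((hasDerivAt_pow 2 y).const_mul 15).const_add 15
      refine this.congr_deriv ?_; push_cast; ring
    exact (Real.hasDerivAt_arctan y).sub (hN.div hD (by positivity))
  have key := pos_of_deriv_pos h (fun y hy => by
      have h1 : (0:ℝ) < 1 + y^2 := by positivity
      have : 1/(1+y^2) - ((15+30*y^2-10*y^4)*(15+15*y^2) - (15*y+10*y^3-2*y^5)*(30*y))/(15+15*y^2)^2
          = 2*y^6/(5*(1+y^2)^2) := by field_simp; ring
      rw [this]; positivity) (by norm_num) hx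
  rw [sub_pos, div_lt_iff₀ (by positivity : (0:ℝ) < 15+15*x^2)] at key
  nlinarith [key]

noncomputable def G0 (t : ℝ) : ℝ := t * Real.arctan (Real.sqrt (t^2-1)) / Real.sqrt (t^2-1)
noncomputable def G1 (t : ℝ) : ℝ :=
  (Real.sqrt (t^2-1) - Real.arctan (Real.sqrt (t^2-1))) / (Real.sqrt (t^2-1))^3
noncomputable def G2 (t : ℝ) : ℝ :=
  (3*t*Real.arctan (Real.sqrt (t^2-1)) - Real.sqrt (t^2-1)/t - 2*t*Real.sqrt (t^2-1))
    / (Real.sqrt (t^2-1))^5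
noncomputable def G3 (t : ℝ) : ℝ :=
  (Real.sqrt (t^2-1)*(6*t^2+10-1/t^2) - 3*(4*t^2+1)*Real.arctan (Real.sqrt (t^2-1)))
    / (Real.sqrt (t^2-1))^7

section setup
variable {t : ℝ} (ht : 1 < t)
include ht

lemma ht0 : 0 < t := lt_trans one_pos ht
lemma hsub : 0 < t^2 - 1 := by nlinarith
lemma hSpos : 0 < Real.sqrt (t^2-1) := Real.sqrt_pos.2 (hsub ht)
lemma hS2 : (Real.sqrt (t^2-1))^2 = t^2 - 1 := Real.sq_sqrt (hsub ht).le

lemma arccos_eq : Real.arccos (1/t) = Real.arctan (Real.sqrt (t^2-1)) := by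
  rw [Real.arctan_eq_arccos (Real.sqrt_nonneg _), hS2 ht]
  have : 1 + (t^2 - 1) = t^2 := by ring
  rw [this, Real.sqrt_sq (ht0 ht).le, one_div]

lemma sqrt_one_sub_eq : Real.sqrt (1 - 1/t^2) = Real.sqrt (t^2-1) / t := by
  have h : (1 : ℝ) - 1/t^2 = (t^2-1)/t^2 := by field_simp
  rw [h, Real.sqrt_div (hsub ht).le, Real.sqrt_sq (ht0 ht).le]

lemma rpow_three_half : (t^2 - 1) ^ ((3:ℝ)/2) = (Real.sqrt (t^2-1))^3 := by
  rw [Real.sqrt_eq_rpow, ← Real.rpow_natCast ((t^2-1) ^ ((1:ℝ)/2)) 3,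
    ← Real.rpow_mul (hsub ht).le]
  norm_num

lemma rpow_five_half : (t^2 - 1) ^ ((5:ℝ)/2) = (Real.sqrt (t^2-1))^5 := by
  rw [Real.sqrt_eq_rpow, ← Real.rpow_natCast ((t^2-1) ^ ((1:ℝ)/2)) 5,
    ← Real.rpow_mul (hsub ht).le]
  norm_num

lemma gFun_eq : gFun t = G0 t := by
  rw [gFun, G0, arccos_eq ht, sqrt_one_sub_eq ht, div_div_eq_mul_div]
  ring

lemma gFun'_eq : gFun' t = G1 t := by
  rw [gFun', G1, arccos_eq ht, rpow_three_half ht]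

lemma gFun''_eq : gFun'' t = G2 t := by
  rw [gFun'', G2, arccos_eq ht, sqrt_one_sub_eq ht, rpow_five_half ht]

lemma hasDerivAt_S : HasDerivAt (fun t => Real.sqrt (t^2-1)) (t / Real.sqrt (t^2-1)) t := by
  have h1 : HasDerivAt (fun t : ℝ => t^2 - 1) (2*t) t := by
    have := (hasDerivAt_pow 2 t).sub_const 1
    refine this.congr_deriv ?_; push_cast; ring
  have := (Real.hasDerivAt_sqrt (hsub ht).ne').comp t h1
  refine this.congr_deriv ?_
  field_simp

lemma hasDerivAt_arctanS :
    HasDerivAt (fun t => Real.arctan (Real.sqrt (t^2-1))) (1/(t * Real.sqrt (t^2-1))) t := by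
  have := (Real.hasDerivAt_arctan (Real.sqrt (t^2-1))).comp t (hasDerivAt_S ht)
  refine this.congr_deriv ?_
  rw [hS2 ht]
  have h2 : (1:ℝ) + (t^2-1) = t^2 := by ring
  rw [h2]
  have h3 : Real.sqrt (t^2-1) ≠ 0 := (hSpos ht).ne'
  have h4 : t ≠ 0 := (ht0 ht).ne'
  field_simp

end setup

section derivs
variable {t : ℝ} (ht : 1 < t)
include ht

lemma hasDerivAt_G0 : HasDerivAt G0 (G1 t) t := by
  have h := ((hasDerivAt_id t).mul (hasDerivAt_arctanS ht)).div (hasDerivAt_S ht) (hSpos ht).ne'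
  refine h.congr_deriv ?_
  rw [G1]
  simp only [id, Pi.mul_apply, Pi.sub_apply, Pi.pow_apply]
  set S := Real.sqrt (t^2-1) with hSdef
  set u := Real.arctan S with hudef
  have h2 : S^2 = t^2-1 := hS2 ht
  have h3 : S ≠ 0 := (hSpos ht).ne'
  have h4 : t ≠ 0 := (ht0 ht).ne'
  field_simp
  linear_combination u * h2

lemma hasDerivAt_G1 : HasDerivAt G1 (G2 t) t := by
  have h := ((hasDerivAt_S ht).sub (hasDerivAt_arctanS ht)).div ((hasDerivAt_S ht).pow 3)
    (pow_ne_zero 3 (hSpos ht).ne')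
  refine h.congr_deriv ?_
  rw [G2]
  simp only [id, Pi.mul_apply, Pi.sub_apply, Pi.pow_apply]
  set S := Real.sqrt (t^2-1) with hSdef
  set u := Real.arctan S with hudef
  have h2 : S^2 = t^2-1 := hS2 ht
  have h3 : S ≠ 0 := (hSpos ht).ne'
  have h4 : t ≠ 0 := (ht0 ht).ne'
  field_simp
  linear_combination (0:ℝ) * h2

lemma hasDerivAt_G2 : HasDerivAt G2 (G3 t) t := by
  have hnum : HasDerivAt
      (fun y : ℝ => 3*y*Real.arctan (Real.sqrt (y^2-1)) - Real.sqrt (y^2-1)/y - 2*y*Real.sqrt (y^2-1))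
      ((3*Real.arctan (Real.sqrt (t^2-1)) + 3*t*(1/(t*Real.sqrt (t^2-1))))
        - ((t/Real.sqrt (t^2-1))*t - Real.sqrt (t^2-1))/t^2
        - (2*Real.sqrt (t^2-1) + 2*t*(t/Real.sqrt (t^2-1)))) t := by
    have hA := (((hasDerivAt_id t).const_mul 3).mul (hasDerivAt_arctanS ht))
    have hB := (hasDerivAt_S ht).div (hasDerivAt_id t) (ht0 ht).ne'
    have hC := ((hasDerivAt_id t).const_mul 2).mul (hasDerivAt_S ht)
    have := (hA.sub hB).sub hC
    refine this.congr_deriv ?_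
    simp [id]
  have h := hnum.div ((hasDerivAt_S ht).pow 5) (pow_ne_zero 5 (hSpos ht).ne')
  refine h.congr_deriv ?_
  rw [G3]
  simp only [id, Pi.mul_apply, Pi.sub_apply, Pi.pow_apply]
  set S := Real.sqrt (t^2-1) with hSdef
  set u := Real.arctan S with hudef
  have h2 : S^2 = t^2-1 := hS2 ht
  have h3 : S ≠ 0 := (hSpos ht).ne'
  have h4 : t ≠ 0 := (ht0 ht).ne'
  field_simp
  linear_combination (3*S^4*t^2*u + S^5 - 2*S^5*t^2) * h2

end derivs

section signs
variable {t : ℝ} (ht : 1 < t)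
include ht

lemma G1_pos : 0 < G1 t :=
  div_pos (sub_pos.2 (ineqL1' (hSpos ht))) (pow_pos (hSpos ht) 3)

lemma G1_lt_third : G1 t < 1/3 := by
  rw [G1, div_lt_iff₀ (pow_pos (hSpos ht) 3)]
  nlinarith [ineqL2' (hSpos ht)]

lemma G2_decomp : G2 t = (3*t^2*Real.arctan (Real.sqrt (t^2-1)) - Real.sqrt (t^2-1)
    - 2*t^2*Real.sqrt (t^2-1)) / (t * (Real.sqrt (t^2-1))^5) := by
  rw [G2]
  have h4 : t ≠ 0 := (ht0 ht).ne'
  field_simp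

lemma G2_neg : G2 t < 0 := by
  rw [G2_decomp ht]
  apply div_neg_of_neg_of_pos _ (mul_pos (ht0 ht) (pow_pos (hSpos ht) 5))
  have h5 := ineqL5' (hSpos ht)
  have hs2 := hS2 ht
  have e1 : 3*Real.arctan (Real.sqrt (t^2-1))*(Real.sqrt (t^2-1))^2
      = 3*Real.arctan (Real.sqrt (t^2-1))*(t^2-1) := by
    linear_combination (3*Real.arctan (Real.sqrt (t^2-1))) * hs2
  nlinarith [h5, e1]

lemma G2_gt : -(2/5) < G2 t := by
  rw [G2_decomp ht, lt_div_iff₀ (mul_pos (ht0 ht) (pow_pos (hSpos ht) 5))]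
  have h7 := ineqL7' (hSpos ht)
  have hs2 := hS2 ht
  have hSp := hSpos ht
  have e1 : 3*Real.arctan (Real.sqrt (t^2-1))*(Real.sqrt (t^2-1))^2
      = 3*Real.arctan (Real.sqrt (t^2-1))*(t^2-1) := by
    linear_combination (3*Real.arctan (Real.sqrt (t^2-1))) * hs2
  have e2 : 2*Real.sqrt (t^2-1)*(Real.sqrt (t^2-1))^2 = 2*Real.sqrt (t^2-1)*(t^2-1) := by
    linear_combination (2*Real.sqrt (t^2-1)) * hs2
  nlinarith [h7, e1, e2, mul_nonneg (by linarith : (0:ℝ) ≤ t - 1) (pow_nonneg hSp.le 5)]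

lemma G3_pos : 0 < G3 t := by
  rw [G3]
  apply div_pos _ (pow_pos (hSpos ht) 7)
  have h6 := ineqL6' (hSpos ht)
  have hs2 := hS2 ht
  have key : (Real.sqrt (t^2-1)*(6*t^2+10-1/t^2) - 3*(4*t^2+1)*Real.arctan (Real.sqrt (t^2-1))) * t^2
      = Real.sqrt (t^2-1)*(6*(Real.sqrt (t^2-1))^4+22*(Real.sqrt (t^2-1))^2+15)
        - 3*(4*(Real.sqrt (t^2-1))^2+5)*(1+(Real.sqrt (t^2-1))^2)*Real.arctan (Real.sqrt (t^2-1)) := by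
    have h4 : t ≠ 0 := (ht0 ht).ne'
    field_simp
    linear_combination ((-16-6*t^2)*Real.sqrt (t^2-1) - 6*(Real.sqrt (t^2-1))^3
      + (15+12*t^2)*Real.arctan (Real.sqrt (t^2-1))
      + 12*(Real.sqrt (t^2-1))^2*Real.arctan (Real.sqrt (t^2-1))) * hs2
  nlinarith [pow_pos (ht0 ht) 2, key]

end signs

section transfer
variable {t : ℝ} (ht : 1 < t)
include ht

lemma hasDerivAt_gFun : HasDerivAt gFun (gFun' t) t := by
  rw [gFun'_eq ht]
  refine (hasDerivAt_G0 ht).congr_of_eventuallyEq ?_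
  filter_upwards [Ioi_mem_nhds ht] with y hy using gFun_eq hy

lemma hasDerivAt_gFun' : HasDerivAt gFun' (gFun'' t) t := by
  rw [gFun''_eq ht]
  refine (hasDerivAt_G1 ht).congr_of_eventuallyEq ?_
  filter_upwards [Ioi_mem_nhds ht] with y hy using gFun'_eq hy

lemma hasDerivAt_gFun'' : HasDerivAt gFun'' (G3 t) t := by
  refine (hasDerivAt_G2 ht).congr_of_eventuallyEq ?_
  filter_upwards [Ioi_mem_nhds ht] with y hy using gFun''_eq hy

end transfer

lemma gFun_contDiffOn : ContDiffOn ℝ (⊤ : ℕ∞) gFun (Set.Ioi 1) := by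
  intro t ht
  have ht' : (1:ℝ) < t := ht
  have ht0' : 0 < t := lt_trans one_pos ht'
  have hne : t ≠ 0 := ht0'.ne'
  have h1 : (1:ℝ)/t ≠ 1 := by
    have : (1:ℝ)/t < 1 := by rw [div_lt_one ht0']; exact ht'
    linarith
  have h2 : (1:ℝ)/t ≠ -1 := by
    have : (0:ℝ) < 1/t := by positivity
    linarith
  have hpos : 0 < 1 - 1/t^2 := by
    have : 1/t^2 < 1 := by rw [div_lt_one (by positivity)]; nlinarith
    linarith
  have ca : ContDiffAt ℝ (⊤ : ℕ∞) (fun t : ℝ => Real.arccos (1/t)) t := by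
    exact (Real.contDiffAt_arccos h2 h1).comp t (contDiffAt_const.div contDiffAt_id hne)
  have cs : ContDiffAt ℝ (⊤ : ℕ∞) (fun t : ℝ => Real.sqrt (1 - 1/t^2)) t := by
    refine (Real.contDiffAt_sqrt hpos.ne').comp t ?_
    exact contDiffAt_const.sub (contDiffAt_const.div (contDiffAt_id.pow 2) (by positivity))
  exact ((ca.div cs (Real.sqrt_ne_zero'.2 hpos)).contDiffWithinAt)

lemma gFun'_strictAnti : StrictAntiOn gFun' (Set.Ioi 1) := by
  apply strictAntiOn_of_deriv_neg (convex_Ioi 1)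
  · exact fun y hy => (hasDerivAt_gFun' hy).differentiableAt.continuousAt.continuousWithinAt
  · intro y hy
    rw [interior_Ioi] at hy
    rw [(hasDerivAt_gFun' hy).deriv, gFun''_eq hy]
    exact G2_neg hy

lemma gFun''_strictMono : StrictMonoOn gFun'' (Set.Ioi 1) := by
  apply strictMonoOn_of_deriv_pos (convex_Ioi 1)
  · exact fun y hy => (hasDerivAt_gFun'' hy).differentiableAt.continuousAt.continuousWithinAt
  · intro y hy
    rw [interior_Ioi] at hy
    rw [(hasDerivAt_gFun'' hy).deriv]
    exact G3_pos hy

lemma arctan_pos' {x : ℝ} (hx : 0 < x) : 0 < Real.arctan x := by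
  have := Real.arctan_strictMono hx
  rwa [Real.arctan_zero] at this

lemma tendsto_gFun'_atTop : Tendsto gFun' atTop (𝓝 0) := by
  have hupper : Tendsto (fun t : ℝ => 1/(t^2-1)) atTop (𝓝 0) := by
    have h1 : Tendsto (fun t : ℝ => t^2-1) atTop atTop := by
      have h0 : Tendsto (fun t : ℝ => t^2) atTop atTop := tendsto_pow_atTop two_ne_zero
      exact Filter.tendsto_atTop_add_const_right atTop (-1) h0
    simpa [one_div, Pi.inv_def] using h1.inv_tendsto_atTop
  refine tendsto_of_tendsto_of_tendsto_of_le_of_le' tendsto_const_nhds hupper ?_ ?_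
  · filter_upwards [eventually_gt_atTop (1:ℝ)] with t ht
    exact (le_of_lt (by rw [gFun'_eq ht]; exact G1_pos ht))
  · filter_upwards [eventually_gt_atTop (1:ℝ)] with t ht
    rw [gFun'_eq ht, G1, div_le_div_iff₀ (pow_pos (hSpos ht) 3) (hsub ht)]
    have hu := arctan_pos' (hSpos ht)
    have hs2 := hS2 ht
    have e : Real.sqrt (t^2-1)*(t^2-1) = (Real.sqrt (t^2-1))^3 := by
      linear_combination (-Real.sqrt (t^2-1)) * hs2
    nlinarith [mul_nonneg hu.le (hsub ht).le, e]

lemma tendsto_gFun''_atTop : Tendsto gFun'' atTop (𝓝 0) := by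
  have hlower : Tendsto (fun t : ℝ => -12/t^3) atTop (𝓝 0) := by
    have h0 : Tendsto (fun t : ℝ => t^3) atTop atTop := tendsto_pow_atTop three_ne_zero
    have h1 : Tendsto (fun t : ℝ => (t^3)⁻¹) atTop (𝓝 0) := h0.inv_tendsto_atTop
    have := h1.const_mul (-12)
    simpa [div_eq_mul_inv, mul_comm] using this
  refine tendsto_of_tendsto_of_tendsto_of_le_of_le' hlower tendsto_const_nhds ?_ ?_
  · filter_upwards [eventually_ge_atTop (2:ℝ)] with t ht2
    have ht : (1:ℝ) < t := by linarith
    have t0 := ht0 ht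
    have hSp := hSpos ht
    have hu := arctan_pos' hSp
    have hs2 := hS2 ht
    rw [gFun''_eq ht, G2_decomp ht, div_le_div_iff₀ (pow_pos t0 3) (mul_pos t0 (pow_pos hSp 5))]
    have e4 : (Real.sqrt (t^2-1))^4 = (t^2-1)^2 := by
      linear_combination ((Real.sqrt (t^2-1))^2 + t^2 - 1) * hs2
    have hB : 0 ≤ t * Real.sqrt (t^2-1) * (12*(Real.sqrt (t^2-1))^4 - t^2 - 2*t^4) := by
      apply mul_nonneg (mul_pos t0 hSp).le
      have h4 : 0 ≤ t^2 - 4 := by nlinarith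
      nlinarith [e4, mul_nonneg h4 (sq_nonneg t)]
    nlinarith [hB, mul_nonneg (pow_nonneg t0.le 5) hu.le]
  · filter_upwards [eventually_gt_atTop (1:ℝ)] with t ht
    rw [gFun''_eq ht]
    exact (G2_neg ht).le

lemma tendsto_gFun_one : Tendsto gFun (𝓝[>] (1:ℝ)) (𝓝 1) := by
  have hlo : Tendsto (fun t : ℝ => t - t*(t^2-1)/3) (𝓝[>] (1:ℝ)) (𝓝 1) := by
    refine Tendsto.mono_left ?_ nhdsWithin_le_nhds
    have c : Continuous (fun t : ℝ => t - t*(t^2-1)/3) := by continuity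
    have := c.tendsto 1
    norm_num at this
    exact this
  have hhi : Tendsto (fun t : ℝ => t) (𝓝[>] (1:ℝ)) (𝓝 1) :=
    (continuous_id.tendsto 1).mono_left nhdsWithin_le_nhds
  refine tendsto_of_tendsto_of_tendsto_of_le_of_le' hlo hhi ?_ ?_
  · filter_upwards [self_mem_nhdsWithin] with t ht
    have ht' : (1:ℝ) < t := ht
    have hSp := hSpos ht'
    have t0 := ht0 ht'
    have hs2 := hS2 ht'
    rw [gFun_eq ht', G0, le_div_iff₀ hSp]
    have e : t*Real.sqrt (t^2-1)*(t^2-1) = t*(Real.sqrt (t^2-1))^3 := by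
      linear_combination (-(t*Real.sqrt (t^2-1))) * hs2
    nlinarith [mul_lt_mul_of_pos_left (ineqL2' hSp) (by linarith : (0:ℝ) < t/3), e]
  · filter_upwards [self_mem_nhdsWithin] with t ht
    have ht' : (1:ℝ) < t := ht
    have hSp := hSpos ht'
    rw [gFun_eq ht', G0, div_le_iff₀ hSp]
    nlinarith [ineqL1' hSp, ht0 ht']

lemma tendsto_gFun'_one : Tendsto gFun' (𝓝[>] (1:ℝ)) (𝓝 (1/3)) := by
  have hlo : Tendsto (fun t : ℝ => 1/3 - (t^2-1)/5) (𝓝[>] (1:ℝ)) (𝓝 (1/3)) := by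
    refine Tendsto.mono_left ?_ nhdsWithin_le_nhds
    have c : Continuous (fun t : ℝ => 1/3 - (t^2-1)/5) := by continuity
    have := c.tendsto 1
    norm_num at this
    exact this
  refine tendsto_of_tendsto_of_tendsto_of_le_of_le' hlo tendsto_const_nhds ?_ ?_
  · filter_upwards [self_mem_nhdsWithin] with t ht
    have ht' : (1:ℝ) < t := ht
    have hSp := hSpos ht'
    have hs2 := hS2 ht'
    rw [gFun'_eq ht', G1, le_div_iff₀ (pow_pos hSp 3)]
    have e6 : (t^2-1)*(Real.sqrt (t^2-1))^3 = (Real.sqrt (t^2-1))^5 := by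
      linear_combination (-(Real.sqrt (t^2-1))^3) * hs2
    nlinarith [ineqL3' hSp, e6]
  · filter_upwards [self_mem_nhdsWithin] with t ht
    have ht' : (1:ℝ) < t := ht
    rw [gFun'_eq ht']
    exact (G1_lt_third ht').le

lemma tendsto_gFun''_one : Tendsto gFun'' (𝓝[>] (1:ℝ)) (𝓝 (-2/5)) := by
  have hmul : Tendsto (fun t => gFun'' t * t) (𝓝[>] (1:ℝ)) (𝓝 (-2/5)) := by
    have hlo : Tendsto (fun t : ℝ => -2/5 + 3*(t^2-1)/5 - 3*t^2*(t^2-1)/7) (𝓝[>] (1:ℝ))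
        (𝓝 (-2/5)) := by
      refine Tendsto.mono_left ?_ nhdsWithin_le_nhds
      have c : Continuous (fun t : ℝ => -2/5 + 3*(t^2-1)/5 - 3*t^2*(t^2-1)/7) := by continuity
      have := c.tendsto 1
      norm_num at this
      convert this using 2 <;> norm_num
    have hhi : Tendsto (fun t : ℝ => -2/5 + 3*(t^2-1)/5) (𝓝[>] (1:ℝ)) (𝓝 (-2/5)) := by
      refine Tendsto.mono_left ?_ nhdsWithin_le_nhds
      have c : Continuous (fun t : ℝ => -2/5 + 3*(t^2-1)/5) := by continuity
      have := c.tendsto 1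
      norm_num at this
      convert this using 2 <;> norm_num
    refine tendsto_of_tendsto_of_tendsto_of_le_of_le' hlo hhi ?_ ?_
    · filter_upwards [self_mem_nhdsWithin] with t ht
      have ht' : (1:ℝ) < t := ht
      have hSp := hSpos ht'
      have hs2 := hS2 ht'
      have t0 := ht0 ht'
      have hH : gFun'' t * t = (3*t^2*Real.arctan (Real.sqrt (t^2-1)) - Real.sqrt (t^2-1)
          - 2*t^2*Real.sqrt (t^2-1)) / (Real.sqrt (t^2-1))^5 := by
        rw [gFun''_eq ht', G2_decomp ht']
        field_simp
      rw [hH, le_div_iff₀ (pow_pos hSp 5)]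
      have e1 : 3*Real.arctan (Real.sqrt (t^2-1))*t^2
          = 3*Real.arctan (Real.sqrt (t^2-1)) + 3*Real.arctan (Real.sqrt (t^2-1))*(Real.sqrt (t^2-1))^2 := by
        linear_combination (-3*Real.arctan (Real.sqrt (t^2-1))) * hs2
      have e2 : 2*Real.sqrt (t^2-1)*t^2 = 2*Real.sqrt (t^2-1) + 2*(Real.sqrt (t^2-1))^3 := by
        linear_combination (-2*Real.sqrt (t^2-1)) * hs2
      have e6 : (t^2-1)*(Real.sqrt (t^2-1))^5 = (Real.sqrt (t^2-1))^7 := by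
        linear_combination (-(Real.sqrt (t^2-1))^5) * hs2
      have e8 : t^2*(t^2-1)*(Real.sqrt (t^2-1))^5 = (Real.sqrt (t^2-1))^7 + (Real.sqrt (t^2-1))^9 := by
        linear_combination (-(t^2*(Real.sqrt (t^2-1))^5 + (Real.sqrt (t^2-1))^7)) * hs2
      nlinarith [ineqL4' hSp, mul_lt_mul_of_pos_right (ineqL4' hSp) (pow_pos hSp 2),
        e1, e2, e6, e8]
    · filter_upwards [self_mem_nhdsWithin] with t ht
      have ht' : (1:ℝ) < t := ht
      have hSp := hSpos ht'
      have hs2 := hS2 ht'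
      have t0 := ht0 ht'
      have hH : gFun'' t * t = (3*t^2*Real.arctan (Real.sqrt (t^2-1)) - Real.sqrt (t^2-1)
          - 2*t^2*Real.sqrt (t^2-1)) / (Real.sqrt (t^2-1))^5 := by
        rw [gFun''_eq ht', G2_decomp ht']
        field_simp
      rw [hH, div_le_iff₀ (pow_pos hSp 5)]
      have e1 : 3*Real.arctan (Real.sqrt (t^2-1))*t^2
          = 3*Real.arctan (Real.sqrt (t^2-1)) + 3*Real.arctan (Real.sqrt (t^2-1))*(Real.sqrt (t^2-1))^2 := by
        linear_combination (-3*Real.arctan (Real.sqrt (t^2-1))) * hs2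
      have e2 : 2*Real.sqrt (t^2-1)*t^2 = 2*Real.sqrt (t^2-1) + 2*(Real.sqrt (t^2-1))^3 := by
        linear_combination (-2*Real.sqrt (t^2-1)) * hs2
      have e6 : (t^2-1)*(Real.sqrt (t^2-1))^5 = (Real.sqrt (t^2-1))^7 := by
        linear_combination (-(Real.sqrt (t^2-1))^5) * hs2
      nlinarith [ineqL3' hSp, mul_lt_mul_of_pos_right (ineqL3' hSp) (pow_pos hSp 2),
        e1, e2, e6]
  have hinv : Tendsto (fun t : ℝ => t⁻¹) (𝓝[>] (1:ℝ)) (𝓝 1) := by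
    have : Tendsto (fun t : ℝ => t⁻¹) (𝓝 (1:ℝ)) (𝓝 1) := by
      simpa using (continuousAt_inv₀ (one_ne_zero (α := ℝ))).tendsto
    exact this.mono_left nhdsWithin_le_nhds
  have := hmul.mul hinv
  rw [mul_one] at this
  refine this.congr' ?_
  filter_upwards [self_mem_nhdsWithin] with t ht
  have ht' : (1:ℝ) < t := ht
  field_simp

theorem stmt_2 :
    ContDiffOn ℝ (⊤ : ℕ∞) gFun (Set.Ioi 1) ∧
    (∀ t ∈ Set.Ioi (1:ℝ), deriv gFun t = gFun' t) ∧
    (∀ t ∈ Set.Ioi (1:ℝ), deriv (deriv gFun) t = gFun'' t) ∧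
    (∀ t ∈ Set.Ioi (1:ℝ), 0 < gFun' t) ∧
    StrictAntiOn gFun' (Set.Ioi 1) ∧
    (∀ t ∈ Set.Ioi (1:ℝ), gFun'' t < 0) ∧
    StrictMonoOn gFun'' (Set.Ioi 1) ∧
    Filter.Tendsto gFun' Filter.atTop (nhds 0) ∧
    Filter.Tendsto gFun'' Filter.atTop (nhds 0) ∧
    Filter.Tendsto gFun (nhdsWithin 1 (Set.Ioi 1)) (nhds 1) ∧
    Filter.Tendsto gFun' (nhdsWithin 1 (Set.Ioi 1)) (nhds (1/3)) ∧
    Filter.Tendsto gFun'' (nhdsWithin 1 (Set.Ioi 1)) (nhds (-2/5)) ∧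
    (∀ t ∈ Set.Ioi (1:ℝ), |gFun' t| ≤ 1/3 ∧ |gFun'' t| ≤ 2/5) := by
  refine ⟨gFun_contDiffOn, fun t ht => (hasDerivAt_gFun ht).deriv, ?_, ?_,
    gFun'_strictAnti, ?_, gFun''_strictMono, tendsto_gFun'_atTop, tendsto_gFun''_atTop,
    tendsto_gFun_one, tendsto_gFun'_one, tendsto_gFun''_one, ?_⟩
  · intro t ht
    have heq : deriv gFun =ᶠ[𝓝 t] gFun' := by
      filter_upwards [Ioi_mem_nhds ht] with y hy using (hasDerivAt_gFun hy).deriv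
    rw [heq.deriv_eq, (hasDerivAt_gFun' ht).deriv]
  · intro t ht
    rw [gFun'_eq ht]
    exact G1_pos ht
  · intro t ht
    rw [gFun''_eq ht]
    exact G2_neg ht
  · intro t ht
    refine ⟨?_, ?_⟩
    · rw [abs_of_pos (by rw [gFun'_eq ht]; exact G1_pos ht), gFun'_eq ht]
      exact (G1_lt_third ht).le
    · rw [abs_le, gFun''_eq ht]
      exact ⟨by linarith [G2_gt ht], by linarith [G2_neg ht]⟩
end

section
/- The function ψ : ℝ → ℝ defined by ψ(x) = sinh(x)/x for x ≠ 0 and ψ(0) = 1 is analytic and satisfies ψ(x) = Σ_{n=0}^∞ x^{2n}/(2n+1)! for all x ∈ ℝ; moreover for every k ∈ ℕ₀ and every x > 0 the k-th derivative satisfies |ψ^{(k)}(x)| ≤ e^x/(k+1). -/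
/-!
Dividing the series of `sinh` by `x` exhibits `ψ` as the entire power series
`∑ aₙ xⁿ` with `a₂ₙ = 1/(2n+1)!` and `a₂ₙ₊₁ = 0`. Re-expanding an entire power series at `x`
bounds its `k`-th derivative there by `k! ∑ₗ C(k+l, l) |a_{k+l}| |x|ˡ`. Since `|aₙ| ≤ 1/(n+1)!`
and `k! C(k+l, l) l! (k+1) ≤ (k+l+1)!`, the `l`-th term is at most `xˡ / (l! (k+1))`, and these
sum to `eˣ/(k+1)`.
-/

open Real

/-- `ψ(x) = sinh(x)/x` for `x ≠ 0`, `ψ(0) = 1`. -/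
noncomputable def psi (x : ℝ) : ℝ := if x = 0 then 1 else Real.sinh x / x

open Finset FormalMultilinearSeries
open scoped Nat NNReal ENNReal

theorem NNReal.tsum_sigma_card_eq_choose (k : ℕ) (g : ℕ → ℝ≥0) :
    ∑' s : Σ l : ℕ, {s : Finset (Fin (k + l)) // #s = l}, g s.1 =
      ∑' l, ((k + l).choose l : ℝ≥0) * g l := by
  have fiber (l : ℕ) : ∑' _ : {s : Finset (Fin (k + l)) // #s = l}, g l =
      ((k + l).choose l : ℝ≥0) * g l := by
    rw [tsum_fintype, Finset.sum_const, Finset.card_univ, Fintype.card_finset_len,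
      Fintype.card_fin, nsmul_eq_mul]
  by_cases h : Summable fun s : Σ l : ℕ, {s : Finset (Fin (k + l)) // #s = l} ↦ g s.1
  · rw [h.tsum_sigma' fun _ ↦ (hasSum_fintype _).summable]
    exact tsum_congr fiber
  · rw [tsum_eq_zero_of_not_summable h, tsum_eq_zero_of_not_summable]
    rw [NNReal.summable_sigma, not_and] at h
    simpa only [fiber] using h fun _ ↦ (hasSum_fintype _).summable

theorem FormalMultilinearSeries.nnnorm_changeOrigin_le_tsum_choose {𝕜 E F : Type*}
    [NontriviallyNormedField 𝕜] [NormedAddCommGroup E] [NormedSpace 𝕜 E]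
    [NormedAddCommGroup F] [NormedSpace 𝕜 F] (p : FormalMultilinearSeries 𝕜 E F) {x : E}
    (hx : (‖x‖₊ : ℝ≥0∞) < p.radius) (k : ℕ) :
    ‖p.changeOrigin x k‖₊ ≤ ∑' l, ((k + l).choose l : ℝ≥0) * ‖p (k + l)‖₊ * ‖x‖₊ ^ l := by
  simpa only [NNReal.tsum_sigma_card_eq_choose k fun l ↦ ‖p (k + l)‖₊ * ‖x‖₊ ^ l, mul_assoc]
    using p.nnnorm_changeOrigin_le k hx

theorem HasFPowerSeriesOnBall.norm_iteratedDeriv_le {𝕜 F : Type*} [NontriviallyNormedField 𝕜]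
    [NormedAddCommGroup F] [NormedSpace 𝕜 F] [CompleteSpace F] {f : 𝕜 → F}
    {p : FormalMultilinearSeries 𝕜 𝕜 F} {r : ℝ≥0∞} (hf : HasFPowerSeriesOnBall f p 0 r) {x : 𝕜}
    (hx : (‖x‖₊ : ℝ≥0∞) < r) (k : ℕ) :
    ‖iteratedDeriv k f x‖ ≤ k ! * ∑' l, ((k + l).choose l : ℝ) * ‖p (k + l)‖ * ‖x‖ ^ l := by
  have htaylor : iteratedDeriv k f x = k ! • p.changeOrigin x k fun _ ↦ 1 := by
    rw [iteratedDeriv_eq_iteratedFDeriv, (hf.changeOrigin hx).factorial_smul, zero_add]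
  have hcoeff : ‖p.changeOrigin x k‖ ≤ ∑' l, ((k + l).choose l : ℝ) * ‖p (k + l)‖ * ‖x‖ ^ l := by
    simpa [NNReal.coe_tsum] using NNReal.coe_le_coe.mpr
      (p.nnnorm_changeOrigin_le_tsum_choose (hx.trans_le hf.r_le) k)
  calc ‖iteratedDeriv k f x‖ ≤ k ! * ‖p.changeOrigin x k‖ := by
        rw [htaylor]
        refine (norm_nsmul_le ..).trans ?_
        gcongr
        exact ((p.changeOrigin x k).le_opNorm _).trans_eq (by simp)
    _ ≤ _ := by gcongr

noncomputable def psiCoeff (n : ℕ) : ℝ := if Even n then ((n + 1)! : ℝ)⁻¹ else 0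

theorem abs_psiCoeff_le (n : ℕ) : |psiCoeff n| ≤ ((n + 1)! : ℝ)⁻¹ := by
  unfold psiCoeff
  split_ifs
  · rw [abs_of_nonneg (by positivity)]
  · rw [abs_zero]
    positivity

theorem hasSum_psi (x : ℝ) : HasSum (fun n ↦ x ^ (2 * n) / (2 * n + 1)!) (psi x) := by
  rcases eq_or_ne x 0 with rfl | hx
  · convert hasSum_single (f := fun n ↦ (0 : ℝ) ^ (2 * n) / (2 * n + 1)!) 0 fun n hn ↦ by simp [hn]
    simp [psi]
  · rw [psi, if_neg hx]
    have hdiv (n : ℕ) : x ^ (2 * n + 1) / (2 * n + 1)! / x = x ^ (2 * n) / (2 * n + 1)! := by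
      rw [pow_succ]
      field_simp
    simpa only [hdiv] using (Real.hasSum_sinh x).div_const x

theorem hasSum_psiCoeff_mul_pow (x : ℝ) : HasSum (fun n ↦ psiCoeff n * x ^ n) (psi x) := by
  have hzero : ∀ n ∉ Set.range (2 * ·), psiCoeff n * x ^ n = 0 := by
    intro n hn
    have : ¬Even n := fun ⟨m, hm⟩ ↦ hn ⟨m, by dsimp only; omega⟩
    simp [psiCoeff, this]
  rw [← (mul_right_injective₀ two_ne_zero).hasSum_iff hzero]
  convert hasSum_psi x using 2 with n
  simp [psiCoeff, div_eq_inv_mul]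

noncomputable def psiSeries : FormalMultilinearSeries ℝ ℝ ℝ := ofScalars ℝ psiCoeff

theorem radius_psiSeries : psiSeries.radius = ⊤ := by
  refine ENNReal.eq_top_of_forall_nnreal_le fun r ↦ le_radius_of_summable _ ?_
  refine (Real.summable_pow_div_factorial r).of_nonneg_of_le (fun n ↦ by positivity) fun n ↦ ?_
  rw [psiSeries, ofScalars_norm, Real.norm_eq_abs, div_eq_inv_mul]
  gcongr
  exact (abs_psiCoeff_le n).trans (inv_anti₀ (by positivity) (mod_cast Nat.factorial_le n.le_succ))

theorem hasFPowerSeriesOnBall_psi : HasFPowerSeriesOnBall psi psiSeries 0 ⊤ where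
  r_le := radius_psiSeries.ge
  r_pos := ENNReal.zero_lt_top
  hasSum {y} _ := by
    simpa only [psiSeries, ofScalars_apply_eq, smul_eq_mul, zero_add] using hasSum_psiCoeff_mul_pow y

theorem Nat.factorial_mul_choose_mul_factorial_mul_succ_le (k l : ℕ) :
    k ! * (k + l).choose l * l ! * (k + 1) ≤ (k + l + 1)! :=
  calc k ! * (k + l).choose l * l ! * (k + 1) = (k + l)! * (k + 1) := by
        rw [← Nat.add_choose_mul_factorial_mul_factorial]
        ring
    _ ≤ (k + l)! * (k + l + 1) := by gcongr; omega
    _ = (k + l + 1)! := by rw [Nat.factorial_succ, mul_comm]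

theorem factorial_mul_choose_mul_abs_psiCoeff_le (k l : ℕ) :
    k ! * (k + l).choose l * |psiCoeff (k + l)| ≤ (l ! * (k + 1) : ℝ)⁻¹ := by
  have hcount : (k ! * (k + l).choose l * l ! * (k + 1) : ℝ) ≤ (k + l + 1)! := by
    exact_mod_cast Nat.factorial_mul_choose_mul_factorial_mul_succ_le k l
  calc k ! * (k + l).choose l * |psiCoeff (k + l)|
      ≤ k ! * (k + l).choose l * ((k + l + 1)! : ℝ)⁻¹ := by gcongr; exact abs_psiCoeff_le _
    _ ≤ (l ! * (k + 1) : ℝ)⁻¹ := by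
      rw [← div_eq_mul_inv, div_le_iff₀ (by positivity), inv_mul_eq_div,
        le_div_iff₀ (by positivity), ← mul_assoc]
      exact hcount

theorem abs_iteratedDeriv_psi_le (k : ℕ) {x : ℝ} (hx : 0 < x) :
    |iteratedDeriv k psi x| ≤ exp x / (k + 1) := by
  have hterm (l : ℕ) : k ! * (k + l).choose l * |psiCoeff (k + l)| * x ^ l ≤
      x ^ l / l ! * (k + 1 : ℝ)⁻¹ :=
    calc _ ≤ (l ! * (k + 1) : ℝ)⁻¹ * x ^ l := by
          gcongr; exact factorial_mul_choose_mul_abs_psiCoeff_le k l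
      _ = x ^ l / l ! * (k + 1 : ℝ)⁻¹ := by rw [mul_inv]; ring
  have hsummable : Summable fun l : ℕ ↦ x ^ l / l ! * (k + 1 : ℝ)⁻¹ :=
    (Real.summable_pow_div_factorial x).mul_right _
  calc |iteratedDeriv k psi x|
      ≤ k ! * ∑' l, ((k + l).choose l : ℝ) * ‖psiSeries (k + l)‖ * ‖x‖ ^ l := by
        rw [← Real.norm_eq_abs]
        exact hasFPowerSeriesOnBall_psi.norm_iteratedDeriv_le (by simp) k
    _ = ∑' l, k ! * (k + l).choose l * |psiCoeff (k + l)| * x ^ l := by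
        rw [← tsum_mul_left]
        congr with l
        rw [psiSeries, ofScalars_norm, Real.norm_eq_abs, Real.norm_of_nonneg hx.le]
        ring
    _ ≤ ∑' l, x ^ l / l ! * (k + 1 : ℝ)⁻¹ :=
        Summable.tsum_le_tsum hterm
          (hsummable.of_nonneg_of_le (fun l ↦ by positivity) hterm) hsummable
    _ = exp x / (k + 1) := by
        rw [tsum_mul_right, Real.exp_eq_exp_ℝ, NormedSpace.exp_eq_tsum_div, div_eq_mul_inv]

theorem stmt_4 :
    (∀ x : ℝ, AnalyticAt ℝ psi x) ∧
    (∀ x : ℝ, psi x = ∑' n : ℕ, x ^ (2*n) / ((2*n+1).factorial : ℝ)) ∧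
    (∀ k : ℕ, ∀ x : ℝ, 0 < x →
      |iteratedDeriv k psi x| ≤ Real.exp x / (k+1)) :=
  ⟨fun x ↦ hasFPowerSeriesOnBall_psi.analyticAt_of_mem (by simp),
    fun x ↦ (hasSum_psi x).tsum_eq.symm,
    fun k _ hx ↦ abs_iteratedDeriv_psi_le k hx⟩
end

section
/- Let x, y > 0 with x/y < 1, and define F : ℝ → ℝ by F(s) = 2y ∫₀^∞ K₀(2yt · sinh(st)/(st)) e^{−2xt} dt for s ≠ 0 and F(0) = ∫₀^∞ K₀(t) e^{−(x/y)t} dt. Then F is twice continuously differentiable with F'(0) = 0 and F''(0) = −(1/(12 y²)) ∫₀^∞ t³ K₁(t) e^{−(x/y)t} dt. -/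
/-!
Substituting `τ = 2yt` gives `F s = G (s / (2y))` with `c = x / y` and
`G σ = ∫₀^∞ K₀(ψ(σ, t)) e^{-ct} dt`, where `ψ(σ, t) = sinh(σt)/σ = t ∫₀¹ cosh(σtr) dr` is smooth
in `σ` also at `σ = 0`. With `J_n(z) = ∫₀^∞ coshⁿ u e^{-z cosh u} du` one has `K₀ = J₀`,
`K₁ = J₁` and `J_n' = -J_{n+1}`, so `G` is differentiated twice under the integral sign.
Domination, uniformly in `σ`, comes from `ψ ≥ t`, `|∂_σ ψ| ≤ tψ`, `0 ≤ ∂_σ² ψ ≤ t²ψ` together with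
`J₀(z) ≲ z^{-1/2} e^{-z}`, `z J₁(z) ≤ 2e^{-z/2}` and `z² J₂(z) ≤ 8e^{-z/4}`.
At `σ = 0` one has `∂_σ ψ = 0` and `∂_σ² ψ = t³/3`, which gives `G'(0) = 0` and
`G''(0) = -(1/3) ∫₀^∞ t³ K₁(t) e^{-ct} dt`; the chain rule contributes the factor `1/(2y)²`.
-/

open Real Set MeasureTheory

open Filter Topology

namespace BesselKSinhc

theorem integrableOn_pow_mul_exp_neg_div (n : ℕ) {b : ℝ} (hb : 0 < b) :
    IntegrableOn (fun t => t ^ n * exp (-(t / b))) (Ioi 0) := by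
  refine (integrableOn_rpow_mul_exp_neg_mul_rpow (s := n) (by linarith [n.cast_nonneg (α := ℝ)])
    one_pos (inv_pos.2 hb)).congr_fun (fun t _ => ?_) measurableSet_Ioi
  simp [rpow_one, div_eq_inv_mul]

theorem abs_mul_exp_neg_mul_le {c t : ℝ} (hc : 0 ≤ c) (ht : 0 ≤ t) (a : ℝ) :
    |a * exp (-c * t)| ≤ |a| := by
  rw [abs_mul, abs_of_pos (exp_pos _)]
  exact mul_le_of_le_one_right (abs_nonneg a) (exp_le_one_iff.2 (by nlinarith))

theorem hasDerivAt_integral_of_forall_abs_deriv_le {α : Type*} [MeasurableSpace α]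
    {μ : Measure α} {F F' : ℝ → α → ℝ} {bound : α → ℝ} {x₀ : ℝ}
    (hF_meas : ∀ x, AEStronglyMeasurable (F x) μ) (hF_int : Integrable (F x₀) μ)
    (hF'_meas : AEStronglyMeasurable (F' x₀) μ) (h_bound : ∀ᵐ a ∂μ, ∀ x, |F' x a| ≤ bound a)
    (bound_integrable : Integrable bound μ)
    (h_diff : ∀ᵐ a ∂μ, ∀ x, HasDerivAt (F · a) (F' x a) x) :
    HasDerivAt (fun x => ∫ a, F x a ∂μ) (∫ a, F' x₀ a ∂μ) x₀ :=
  (hasDerivAt_integral_of_dominated_loc_of_deriv_le univ_mem (.of_forall hF_meas) hF_int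
    hF'_meas (h_bound.mono fun _ h x _ => h x) bound_integrable
    (h_diff.mono fun _ h x _ => h x)).2

theorem contDiff_two_of_hasDerivAt {f f' f'' : ℝ → ℝ} (hf : ∀ x, HasDerivAt f (f' x) x)
    (hf' : ∀ x, HasDerivAt f' (f'' x) x) (hf'' : Continuous f'') : ContDiff ℝ 2 f := by
  rw [show (2 : WithTop ℕ∞) = 1 + 1 by norm_num, contDiff_succ_iff_deriv,
    funext fun x => (hf x).deriv, contDiff_one_iff_deriv, funext fun x => (hf' x).deriv]
  exact ⟨fun x => (hf x).differentiableAt, by simp, fun x => (hf' x).differentiableAt, hf''⟩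

theorem abs_sinh_le_cosh (x : ℝ) : |sinh x| ≤ cosh x := by
  rw [abs_sinh, ← cosh_abs x]
  exact (sinh_lt_cosh _).le

theorem one_add_sinh_le_two_mul_cosh (u : ℝ) : 1 + sinh u ≤ 2 * cosh u := by
  have h : exp u * exp (-u) = 1 := by rw [← exp_add, add_neg_cancel, exp_zero]
  rw [sinh_eq, cosh_eq]
  nlinarith [exp_pos u, exp_pos (-u), sq_nonneg (exp u - 1)]

theorem one_add_sq_div_two_le_cosh (u : ℝ) : 1 + u ^ 2 / 2 ≤ cosh u := by
  have hsinh : |u / 2| ≤ |sinh (u / 2)| := by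
    rw [abs_sinh, self_le_sinh_iff]
    exact abs_nonneg _
  have hsq : (u / 2) ^ 2 ≤ sinh (u / 2) ^ 2 := sq_le_sq.2 hsinh
  have hcosh : cosh u = 1 + 2 * sinh (u / 2) ^ 2 := by
    conv_lhs => rw [← mul_div_cancel₀ u (two_ne_zero' ℝ)]
    rw [cosh_two_mul, cosh_sq]; ring
  nlinarith

noncomputable def coshPowIntegral (n : ℕ) (z : ℝ) : ℝ :=
  ∫ u in Ioi (0:ℝ), cosh u ^ n * exp (-(z * cosh u))

theorem besselK_zero_eq : besselK 0 = coshPowIntegral 0 := by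
  ext z
  simp [besselK, coshPowIntegral, neg_mul]

theorem besselK_one_eq : besselK 1 = coshPowIntegral 1 := by
  ext z
  simp [besselK, coshPowIntegral, neg_mul, mul_comm]

theorem exp_neg_mul_cosh_le {z : ℝ} (hz : 0 ≤ z) (u : ℝ) :
    exp (-(z * cosh u)) ≤ exp (-z) * exp (-(z / 2) * u ^ 2) := by
  rw [← exp_add, exp_le_exp]
  nlinarith [one_add_sq_div_two_le_cosh u]

theorem mul_cosh_pow_succ_mul_exp_le (n : ℕ) (z u : ℝ) :
    z * (cosh u ^ (n + 1) * exp (-(z * cosh u)))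
      ≤ 2 * (cosh u ^ n * exp (-(z / 2 * cosh u))) := by
  have hw : z / 2 * cosh u * exp (-(z / 2 * cosh u)) ≤ 1 :=
    (mul_exp_neg_le_exp_neg_one _).trans (exp_le_one_iff.2 (by norm_num))
  have hsplit : exp (-(z * cosh u)) = exp (-(z / 2 * cosh u)) * exp (-(z / 2 * cosh u)) := by
    rw [← exp_add]; ring_nf
  have hpos : 0 ≤ cosh u ^ n * exp (-(z / 2 * cosh u)) := by positivity
  calc z * (cosh u ^ (n + 1) * exp (-(z * cosh u)))
      = 2 * (z / 2 * cosh u * exp (-(z / 2 * cosh u)))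
          * (cosh u ^ n * exp (-(z / 2 * cosh u))) := by rw [hsplit]; ring
    _ ≤ 2 * 1 * (cosh u ^ n * exp (-(z / 2 * cosh u))) := by gcongr
    _ = 2 * (cosh u ^ n * exp (-(z / 2 * cosh u))) := by ring

theorem integrableOn_cosh_pow_mul_exp (n : ℕ) {z : ℝ} (hz : 0 < z) :
    IntegrableOn (fun u => cosh u ^ n * exp (-(z * cosh u))) (Ioi 0) := by
  induction n generalizing z with
  | zero =>
    refine Integrable.mono'
      ((integrable_exp_neg_mul_sq (half_pos hz)).integrableOn.const_mul (exp (-z)))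
      (by fun_prop : Continuous _).aestronglyMeasurable.restrict (ae_of_all _ fun u => ?_)
    rw [pow_zero, one_mul, norm_of_nonneg (exp_pos _).le]
    exact exp_neg_mul_cosh_le hz.le u
  | succ n ih =>
    -- one power of `cosh` is traded for half of the exponential decay
    refine Integrable.mono' ((ih (half_pos hz)).const_mul (2 / z))
      (by fun_prop : Continuous _).aestronglyMeasurable.restrict (ae_of_all _ fun u => ?_)
    rw [norm_of_nonneg (by positivity), div_mul_eq_mul_div, le_div_iff₀ hz, mul_comm _ z]
    exact mul_cosh_pow_succ_mul_exp_le n z u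

theorem coshPowIntegral_nonneg (n : ℕ) (z : ℝ) : 0 ≤ coshPowIntegral n z :=
  integral_nonneg fun u => by positivity

theorem coshPowIntegral_le_of_le (n : ℕ) {z w : ℝ} (hz : 0 < z) (hzw : z ≤ w) :
    coshPowIntegral n w ≤ coshPowIntegral n z :=
  setIntegral_mono_on (integrableOn_cosh_pow_mul_exp n (hz.trans_le hzw))
    (integrableOn_cosh_pow_mul_exp n hz) measurableSet_Ioi fun u _ => by gcongr

theorem hasDerivAt_coshPowIntegral (n : ℕ) {z : ℝ} (hz : 0 < z) :
    HasDerivAt (coshPowIntegral n) (-coshPowIntegral (n + 1) z) z := by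
  have key := hasDerivAt_integral_of_dominated_loc_of_deriv_le
    (μ := volume.restrict (Ioi 0)) (F := fun z u => cosh u ^ n * exp (-(z * cosh u)))
    (F' := fun z u => -(cosh u ^ (n + 1) * exp (-(z * cosh u))))
    (bound := fun u => cosh u ^ (n + 1) * exp (-(z / 2 * cosh u)))
    (Metric.ball_mem_nhds z (half_pos hz))
    (Eventually.of_forall fun _ => (by fun_prop : Continuous _).aestronglyMeasurable)
    (integrableOn_cosh_pow_mul_exp n hz)
    (by fun_prop : Continuous _).aestronglyMeasurable
    (ae_of_all _ fun u w hw => ?_) (integrableOn_cosh_pow_mul_exp (n + 1) (half_pos hz))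
    (ae_of_all _ fun u w _ => ?_)
  · rw [coshPowIntegral, ← integral_neg]
    exact key.2
  · have hzw : z / 2 ≤ w := by
      have := (abs_lt.1 (Metric.mem_ball.1 hw)).1
      linarith
    rw [norm_neg, norm_of_nonneg (by positivity)]
    gcongr
  · have h : HasDerivAt (fun w => -(w * cosh u)) (-cosh u) w := (hasDerivAt_mul_const _).neg
    exact (h.exp.const_mul (cosh u ^ n)).congr_deriv (by ring)

theorem continuousOn_coshPowIntegral (n : ℕ) : ContinuousOn (coshPowIntegral n) (Ioi 0) :=
  fun _ hz => (hasDerivAt_coshPowIntegral n hz).continuousAt.continuousWithinAt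

-- the bound is written as a multiple of the integrand of `Γ(1/2)`
theorem coshPowIntegral_zero_le {z : ℝ} (hz : 0 < z) :
    coshPowIntegral 0 z ≤ √π * (exp (-z) * z ^ ((1 / 2 : ℝ) - 1)) := by
  have hgauss : √(π / (z / 2)) / 2 ≤ √π * z ^ ((1 / 2 : ℝ) - 1) := by
    have hsz : 0 < √z := sqrt_pos.2 hz
    rw [show (1 / 2 : ℝ) - 1 = -(1 / 2) by norm_num, rpow_neg hz.le, ← sqrt_eq_rpow,
      show π / (z / 2) = 2 * π / z by field_simp, sqrt_div' _ hz.le, sqrt_mul zero_le_two,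
      div_div, ← div_eq_mul_inv, div_le_div_iff₀ (by positivity) hsz]
    have h2 : √2 ≤ 2 := sqrt_le_iff.2 ⟨zero_le_two, by norm_num⟩
    have := mul_le_mul_of_nonneg_right h2 (mul_nonneg (sqrt_nonneg π) hsz.le)
    linarith
  calc coshPowIntegral 0 z
      ≤ ∫ u in Ioi (0:ℝ), exp (-z) * exp (-(z / 2) * u ^ 2) :=
        setIntegral_mono_on (integrableOn_cosh_pow_mul_exp 0 hz)
          ((integrable_exp_neg_mul_sq (half_pos hz)).integrableOn.const_mul _) measurableSet_Ioi
          fun u _ => by simpa using exp_neg_mul_cosh_le hz.le u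
    _ = exp (-z) * (√(π / (z / 2)) / 2) := by rw [integral_const_mul, integral_gaussian_Ioi]
    _ ≤ √π * (exp (-z) * z ^ ((1 / 2 : ℝ) - 1)) := by
        rw [mul_left_comm]; gcongr

theorem integrableOn_coshPowIntegral_zero : IntegrableOn (coshPowIntegral 0) (Ioi 0) :=
  Integrable.mono' ((GammaIntegral_convergent one_half_pos).const_mul √π)
    ((continuousOn_coshPowIntegral 0).aestronglyMeasurable measurableSet_Ioi)
    (ae_restrict_of_forall_mem measurableSet_Ioi fun _ hz => by
      rw [norm_of_nonneg (coshPowIntegral_nonneg 0 _)]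
      exact coshPowIntegral_zero_le hz)

theorem hasDerivAt_neg_exp_neg_mul_sinh_div {a : ℝ} (ha : a ≠ 0) (u : ℝ) :
    HasDerivAt (fun u => -(exp (-(a * sinh u)) / a)) (cosh u * exp (-(a * sinh u))) u := by
  have h : HasDerivAt (fun u => -(a * sinh u)) (-(a * cosh u)) u :=
    ((hasDerivAt_sinh u).const_mul a).neg
  exact (h.exp.div_const a).neg.congr_deriv (by field_simp)

theorem tendsto_exp_neg_mul_sinh_atTop {a : ℝ} (ha : 0 < a) :
    Tendsto (fun u => exp (-(a * sinh u))) atTop (𝓝 0) := by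
  have hsinh : Tendsto sinh atTop atTop :=
    tendsto_atTop_mono' _ (eventually_ge_atTop 0 |>.mono fun _ => self_le_sinh_iff.2) tendsto_id
  exact tendsto_exp_atBot.comp (tendsto_neg_atTop_atBot.comp (hsinh.const_mul_atTop ha))

theorem integrableOn_and_integral_cosh_mul_exp_neg_mul_sinh {a : ℝ} (ha : 0 < a) :
    IntegrableOn (fun u => cosh u * exp (-(a * sinh u))) (Ioi 0) ∧
      ∫ u in Ioi (0:ℝ), cosh u * exp (-(a * sinh u)) = 1 / a := by
  have hderiv := fun u (_ : u ∈ Ici (0:ℝ)) => hasDerivAt_neg_exp_neg_mul_sinh_div ha.ne' u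
  have hnonneg := fun u (_ : u ∈ Ioi (0:ℝ)) =>
    (by positivity : 0 ≤ cosh u * exp (-(a * sinh u)))
  have hlim : Tendsto (fun u => -(exp (-(a * sinh u)) / a)) atTop (𝓝 0) := by
    simpa using ((tendsto_exp_neg_mul_sinh_atTop ha).div_const a).neg
  refine ⟨integrableOn_Ioi_deriv_of_nonneg' hderiv hnonneg hlim, ?_⟩
  rw [integral_Ioi_of_hasDerivAt_of_nonneg' hderiv hnonneg hlim]
  simp

theorem mul_coshPowIntegral_one_le {z : ℝ} (hz : 0 < z) :
    z * coshPowIntegral 1 z ≤ 2 * exp (-(z / 2)) := by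
  obtain ⟨hint, hval⟩ := integrableOn_and_integral_cosh_mul_exp_neg_mul_sinh (half_pos hz)
  -- `z cosh u ≥ z/2 + (z/2) sinh u`; against `cosh u du = d(sinh u)` the rest integrates exactly
  have hle : coshPowIntegral 1 z
      ≤ ∫ u in Ioi (0:ℝ), exp (-(z / 2)) * (cosh u * exp (-(z / 2 * sinh u))) :=
    setIntegral_mono_on (integrableOn_cosh_pow_mul_exp 1 hz) (hint.const_mul _) measurableSet_Ioi
      fun u _ => by
        rw [pow_one, mul_left_comm, ← exp_add]
        gcongr
        nlinarith [one_add_sinh_le_two_mul_cosh u]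
  rw [integral_const_mul, hval] at hle
  calc z * coshPowIntegral 1 z ≤ z * (exp (-(z / 2)) * (1 / (z / 2))) := by gcongr
    _ = 2 * exp (-(z / 2)) := by field_simp

theorem mul_coshPowIntegral_succ_le (n : ℕ) {z : ℝ} (hz : 0 < z) :
    z * coshPowIntegral (n + 1) z ≤ 2 * coshPowIntegral n (z / 2) := by
  rw [coshPowIntegral, coshPowIntegral, ← integral_const_mul, ← integral_const_mul]
  exact setIntegral_mono_on ((integrableOn_cosh_pow_mul_exp (n + 1) hz).const_mul z)
    ((integrableOn_cosh_pow_mul_exp n (half_pos hz)).const_mul 2) measurableSet_Ioi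
    fun u _ => mul_cosh_pow_succ_mul_exp_le n z u

theorem sq_mul_coshPowIntegral_two_le {z : ℝ} (hz : 0 < z) :
    z ^ 2 * coshPowIntegral 2 z ≤ 8 * exp (-(z / 4)) := by
  have h2 := mul_coshPowIntegral_succ_le 1 hz
  have h1 := mul_coshPowIntegral_one_le (half_pos hz)
  rw [show z / 2 / 2 = z / 4 by ring] at h1
  nlinarith

noncomputable def unitMoment (g : ℝ → ℝ) (k : ℕ) (v : ℝ) : ℝ :=
  ∫ r in (0:ℝ)..1, r ^ k * g (v * r)

@[fun_prop]
theorem continuous_unitMoment {g : ℝ → ℝ} (hg : Continuous g) (k : ℕ) :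
    Continuous (unitMoment g k) := by
  unfold unitMoment; fun_prop

theorem hasDerivAt_unitMoment {g g' : ℝ → ℝ} (hg : ∀ x, HasDerivAt g (g' x) x)
    (hg' : Continuous g') (k : ℕ) (v : ℝ) :
    HasDerivAt (unitMoment g k) (unitMoment g' (k + 1) v) v := by
  have hgc : Continuous g := continuous_iff_continuousAt.2 fun x => (hg x).continuousAt
  obtain ⟨C, hC⟩ := (isCompact_closedBall (0:ℝ) (|v| + 1)).exists_bound_of_continuousOn
    hg'.continuousOn
  have key := intervalIntegral.hasDerivAt_integral_of_dominated_loc_of_deriv_le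
    (F := fun v r => r ^ k * g (v * r)) (F' := fun v r => r ^ (k + 1) * g' (v * r))
    (μ := volume) (a := 0) (b := 1) (bound := fun _ => C) (Metric.ball_mem_nhds v one_pos)
    (Eventually.of_forall fun _ => (by fun_prop : Continuous _).aestronglyMeasurable)
    ((by fun_prop : Continuous _).intervalIntegrable _ _)
    (by fun_prop : Continuous _).aestronglyMeasurable
    (ae_of_all _ fun r hr w hw => ?_) intervalIntegrable_const
    (ae_of_all _ fun r _ w _ => ?_)
  · exact key.2
  · rw [uIoc_of_le zero_le_one] at hr
    have hr1 : |r| ≤ 1 := abs_le.2 ⟨by linarith [hr.1], hr.2⟩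
    have hw : |w| ≤ |v| + 1 := by
      have := abs_sub_abs_le_abs_sub w v
      rw [Metric.mem_ball, dist_eq_norm, norm_eq_abs] at hw
      linarith
    have hwr : w * r ∈ Metric.closedBall (0:ℝ) (|v| + 1) := by
      rw [mem_closedBall_zero_iff, norm_eq_abs, abs_mul]
      nlinarith [abs_nonneg w, abs_nonneg r]
    calc ‖r ^ (k + 1) * g' (w * r)‖ = |r| ^ (k + 1) * ‖g' (w * r)‖ := by
          rw [norm_mul, norm_pow, norm_eq_abs]
      _ ≤ 1 * C := by
          gcongr
          · exact pow_le_one₀ (abs_nonneg r) hr1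
          · exact hC _ hwr
      _ = C := one_mul C
  · exact (((hg (w * r)).comp w (hasDerivAt_mul_const r)).const_mul (r ^ k)).congr_deriv
      (by ring)

theorem unitMoment_zero_left (g : ℝ → ℝ) (k : ℕ) : unitMoment g k 0 = g 0 / (k + 1) := by
  simp only [unitMoment, zero_mul, intervalIntegral.integral_mul_const, integral_pow]
  ring

theorem unitMoment_cosh_zero {v : ℝ} (hv : v ≠ 0) : unitMoment cosh 0 v = sinh v / v := by
  have hderiv : ∀ r ∈ uIcc (0:ℝ) 1,
      HasDerivAt (fun r => sinh (v * r) / v) (r ^ 0 * cosh (v * r)) r :=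
    fun r _ => ((hasDerivAt_const_mul v).sinh.div_const v).congr_deriv (by field_simp)
  rw [unitMoment, intervalIntegral.integral_eq_sub_of_hasDerivAt hderiv
    ((by fun_prop : Continuous _).intervalIntegrable _ _)]
  simp

theorem one_le_unitMoment_cosh_zero (v : ℝ) : 1 ≤ unitMoment cosh 0 v := by
  have := intervalIntegral.integral_mono_on zero_le_one (intervalIntegrable_const (μ := volume))
    ((by fun_prop : Continuous fun r => r ^ 0 * cosh (v * r)).intervalIntegrable 0 1)
    fun r _ => (by rw [pow_zero, one_mul]; exact one_le_cosh _ : (1:ℝ) ≤ r ^ 0 * cosh (v * r))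
  simpa [unitMoment] using this

theorem abs_unitMoment_sinh_one_le (v : ℝ) : |unitMoment sinh 1 v| ≤ unitMoment cosh 0 v :=
  (intervalIntegral.abs_integral_le_integral_abs zero_le_one).trans <|
    intervalIntegral.integral_mono_on zero_le_one
      ((by fun_prop : Continuous fun r => |r ^ 1 * sinh (v * r)|).intervalIntegrable 0 1)
      ((by fun_prop : Continuous fun r => r ^ 0 * cosh (v * r)).intervalIntegrable 0 1)
      fun r hr => by
        rw [abs_mul, pow_one, pow_zero, one_mul, abs_of_nonneg hr.1]
        exact (mul_le_of_le_one_left (abs_nonneg _) hr.2).trans (abs_sinh_le_cosh _)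

theorem unitMoment_cosh_two_nonneg (v : ℝ) : 0 ≤ unitMoment cosh 2 v :=
  intervalIntegral.integral_nonneg zero_le_one fun r _ => by positivity

theorem unitMoment_cosh_two_le (v : ℝ) : unitMoment cosh 2 v ≤ unitMoment cosh 0 v :=
  intervalIntegral.integral_mono_on zero_le_one
    ((by fun_prop : Continuous fun r => r ^ 2 * cosh (v * r)).intervalIntegrable 0 1)
    ((by fun_prop : Continuous fun r => r ^ 0 * cosh (v * r)).intervalIntegrable 0 1)
    fun r hr => by
      rw [pow_zero, one_mul]
      exact mul_le_of_le_one_left (cosh_pos _).le (pow_le_one₀ hr.1 hr.2)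

theorem hasDerivAt_pow_mul_unitMoment {g g' : ℝ → ℝ} (hg : ∀ x, HasDerivAt g (g' x) x)
    (hg' : Continuous g') (k : ℕ) (t σ : ℝ) :
    HasDerivAt (fun σ => t ^ (k + 1) * unitMoment g k (σ * t))
      (t ^ (k + 2) * unitMoment g' (k + 1) (σ * t)) σ :=
  (((hasDerivAt_unitMoment hg hg' k (σ * t)).comp σ (hasDerivAt_mul_const t)).const_mul
    (t ^ (k + 1))).congr_deriv (by ring)

noncomputable def sinhDiv (σ t : ℝ) : ℝ := t * unitMoment cosh 0 (σ * t)

noncomputable def sinhDivDeriv (σ t : ℝ) : ℝ := t ^ 2 * unitMoment sinh 1 (σ * t)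

noncomputable def sinhDivDeriv2 (σ t : ℝ) : ℝ := t ^ 3 * unitMoment cosh 2 (σ * t)

theorem sinhDiv_eq {σ t : ℝ} (h : σ * t ≠ 0) : sinhDiv σ t = t * (sinh (σ * t) / (σ * t)) := by
  rw [sinhDiv, unitMoment_cosh_zero h]

theorem sinhDiv_zero_left (t : ℝ) : sinhDiv 0 t = t := by
  simp [sinhDiv, unitMoment_zero_left]

theorem sinhDivDeriv_zero_left (t : ℝ) : sinhDivDeriv 0 t = 0 := by
  simp [sinhDivDeriv, unitMoment_zero_left]

theorem sinhDivDeriv2_zero_left (t : ℝ) : sinhDivDeriv2 0 t = t ^ 3 / 3 := by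
  rw [sinhDivDeriv2, zero_mul, unitMoment_zero_left, cosh_zero]
  push_cast
  ring

theorem le_sinhDiv {t : ℝ} (ht : 0 ≤ t) (σ : ℝ) : t ≤ sinhDiv σ t :=
  le_mul_of_one_le_right ht (one_le_unitMoment_cosh_zero _)

theorem abs_sinhDivDeriv_le (σ t : ℝ) :
    |sinhDivDeriv σ t| ≤ t * sinhDiv σ t := by
  rw [sinhDivDeriv, sinhDiv, abs_mul, abs_of_nonneg (by positivity), ← mul_assoc, ← sq]
  exact mul_le_mul_of_nonneg_left (abs_unitMoment_sinh_one_le _) (by positivity)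

theorem sinhDivDeriv2_nonneg {t : ℝ} (ht : 0 ≤ t) (σ : ℝ) : 0 ≤ sinhDivDeriv2 σ t :=
  mul_nonneg (pow_nonneg ht 3) (unitMoment_cosh_two_nonneg _)

theorem sinhDivDeriv2_le {t : ℝ} (ht : 0 ≤ t) (σ : ℝ) :
    sinhDivDeriv2 σ t ≤ t ^ 2 * sinhDiv σ t := by
  rw [sinhDivDeriv2, sinhDiv, ← mul_assoc, ← pow_succ]
  exact mul_le_mul_of_nonneg_left (unitMoment_cosh_two_le _) (by positivity)

theorem hasDerivAt_sinhDiv (t σ : ℝ) : HasDerivAt (sinhDiv · t) (sinhDivDeriv σ t) σ := by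
  simpa [sinhDiv, sinhDivDeriv] using
    hasDerivAt_pow_mul_unitMoment hasDerivAt_cosh continuous_sinh 0 t σ

theorem hasDerivAt_sinhDivDeriv (t σ : ℝ) :
    HasDerivAt (sinhDivDeriv · t) (sinhDivDeriv2 σ t) σ :=
  hasDerivAt_pow_mul_unitMoment hasDerivAt_sinh continuous_cosh 1 t σ

theorem sinhDiv_pos {t : ℝ} (ht : 0 < t) (σ : ℝ) : 0 < sinhDiv σ t :=
  ht.trans_le (le_sinhDiv ht.le σ)

theorem continuousOn_coshPowIntegral_sinhDiv (n : ℕ) (σ : ℝ) :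
    ContinuousOn (fun t => coshPowIntegral n (sinhDiv σ t)) (Ioi 0) :=
  (continuousOn_coshPowIntegral n).comp (by unfold sinhDiv; fun_prop : Continuous _).continuousOn
    fun _ ht => sinhDiv_pos ht σ

theorem continuous_coshPowIntegral_sinhDiv_left (n : ℕ) {t : ℝ} (ht : 0 < t) :
    Continuous fun σ => coshPowIntegral n (sinhDiv σ t) :=
  (continuousOn_coshPowIntegral n).comp_continuous (by unfold sinhDiv; fun_prop)
    fun σ => sinhDiv_pos ht σ

section Transform

variable (c : ℝ)

noncomputable def transform (σ : ℝ) : ℝ :=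
  ∫ t in Ioi (0:ℝ), coshPowIntegral 0 (sinhDiv σ t) * exp (-c * t)

noncomputable def transformDeriv (σ : ℝ) : ℝ :=
  ∫ t in Ioi (0:ℝ), -(coshPowIntegral 1 (sinhDiv σ t) * sinhDivDeriv σ t) * exp (-c * t)

noncomputable def transformDeriv2 (σ : ℝ) : ℝ :=
  ∫ t in Ioi (0:ℝ), (coshPowIntegral 2 (sinhDiv σ t) * sinhDivDeriv σ t ^ 2
    - coshPowIntegral 1 (sinhDiv σ t) * sinhDivDeriv2 σ t) * exp (-c * t)

theorem aestronglyMeasurable_transform_integrand (σ : ℝ) :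
    AEStronglyMeasurable (fun t => coshPowIntegral 0 (sinhDiv σ t) * exp (-c * t))
      (volume.restrict (Ioi 0)) :=
  ((continuousOn_coshPowIntegral_sinhDiv 0 σ).mul (by fun_prop : Continuous _).continuousOn)
    |>.aestronglyMeasurable measurableSet_Ioi

theorem aestronglyMeasurable_transformDeriv_integrand (σ : ℝ) :
    AEStronglyMeasurable
      (fun t => -(coshPowIntegral 1 (sinhDiv σ t) * sinhDivDeriv σ t) * exp (-c * t))
      (volume.restrict (Ioi 0)) :=
  (((continuousOn_coshPowIntegral_sinhDiv 1 σ).mul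
    (by unfold sinhDivDeriv; fun_prop : Continuous _).continuousOn).neg.mul
    (by fun_prop : Continuous _).continuousOn).aestronglyMeasurable measurableSet_Ioi

theorem aestronglyMeasurable_transformDeriv2_integrand (σ : ℝ) :
    AEStronglyMeasurable
      (fun t => (coshPowIntegral 2 (sinhDiv σ t) * sinhDivDeriv σ t ^ 2
        - coshPowIntegral 1 (sinhDiv σ t) * sinhDivDeriv2 σ t) * exp (-c * t))
      (volume.restrict (Ioi 0)) :=
  ((((continuousOn_coshPowIntegral_sinhDiv 2 σ).mul
    (by unfold sinhDivDeriv; fun_prop : Continuous _).continuousOn).sub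
    ((continuousOn_coshPowIntegral_sinhDiv 1 σ).mul
    (by unfold sinhDivDeriv2; fun_prop : Continuous _).continuousOn)).mul
    (by fun_prop : Continuous _).continuousOn).aestronglyMeasurable measurableSet_Ioi

variable {c}

theorem abs_transform_integrand_le (hc : 0 ≤ c) {t : ℝ} (ht : 0 < t) (σ : ℝ) :
    |coshPowIntegral 0 (sinhDiv σ t) * exp (-c * t)| ≤ coshPowIntegral 0 t :=
  (abs_mul_exp_neg_mul_le hc ht.le _).trans <| by
    rw [abs_of_nonneg (coshPowIntegral_nonneg 0 _)]
    exact coshPowIntegral_le_of_le 0 ht (le_sinhDiv ht.le σ)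

theorem abs_transformDeriv_integrand_le (hc : 0 ≤ c) {t : ℝ} (ht : 0 < t) (σ : ℝ) :
    |-(coshPowIntegral 1 (sinhDiv σ t) * sinhDivDeriv σ t) * exp (-c * t)|
      ≤ 2 * (t ^ 1 * exp (-(t / 2))) := by
  set z := sinhDiv σ t
  have hz : t ≤ z := le_sinhDiv ht.le σ
  have hJ := coshPowIntegral_nonneg 1 z
  refine (abs_mul_exp_neg_mul_le hc ht.le _).trans ?_
  calc |-(coshPowIntegral 1 z * sinhDivDeriv σ t)|
      ≤ t * (z * coshPowIntegral 1 z) := by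
        rw [abs_neg, abs_mul, abs_of_nonneg hJ]
        nlinarith [abs_sinhDivDeriv_le σ t]
    _ ≤ t * (2 * exp (-(z / 2))) :=
        mul_le_mul_of_nonneg_left (mul_coshPowIntegral_one_le (ht.trans_le hz)) ht.le
    _ ≤ 2 * (t ^ 1 * exp (-(t / 2))) := by
        rw [pow_one, mul_left_comm]; gcongr

theorem abs_transformDeriv2_integrand_le (hc : 0 ≤ c) {t : ℝ} (ht : 0 < t) (σ : ℝ) :
    |(coshPowIntegral 2 (sinhDiv σ t) * sinhDivDeriv σ t ^ 2
        - coshPowIntegral 1 (sinhDiv σ t) * sinhDivDeriv2 σ t) * exp (-c * t)|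
      ≤ 10 * (t ^ 2 * exp (-(t / 4))) := by
  set z := sinhDiv σ t
  have hz : t ≤ z := le_sinhDiv ht.le σ
  have hz0 : 0 < z := ht.trans_le hz
  have hJ1 := coshPowIntegral_nonneg 1 z
  have hJ2 := coshPowIntegral_nonneg 2 z
  have hd1 : sinhDivDeriv σ t ^ 2 ≤ t ^ 2 * z ^ 2 := by
    rw [← mul_pow, ← sq_abs]
    exact pow_le_pow_left₀ (abs_nonneg _) (abs_sinhDivDeriv_le σ t) 2
  have hd2 := sinhDivDeriv2_le ht.le σ
  have hd2' := sinhDivDeriv2_nonneg ht.le σ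
  have hexp : exp (-(z / 2)) ≤ exp (-(t / 4)) := exp_le_exp.2 (by linarith)
  have hexp' : exp (-(z / 4)) ≤ exp (-(t / 4)) := exp_le_exp.2 (by linarith)
  refine (abs_mul_exp_neg_mul_le hc ht.le _).trans ?_
  calc |coshPowIntegral 2 z * sinhDivDeriv σ t ^ 2 - coshPowIntegral 1 z * sinhDivDeriv2 σ t|
      ≤ coshPowIntegral 2 z * sinhDivDeriv σ t ^ 2 + coshPowIntegral 1 z * sinhDivDeriv2 σ t := by
        rw [abs_le]; constructor <;> nlinarith [sq_nonneg (sinhDivDeriv σ t)]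
    _ ≤ t ^ 2 * (z ^ 2 * coshPowIntegral 2 z + z * coshPowIntegral 1 z) := by
        nlinarith [mul_le_mul_of_nonneg_left hd1 hJ2, mul_le_mul_of_nonneg_left hd2 hJ1]
    _ ≤ t ^ 2 * (8 * exp (-(z / 4)) + 2 * exp (-(z / 2))) :=
        mul_le_mul_of_nonneg_left (add_le_add (sq_mul_coshPowIntegral_two_le hz0)
          (mul_coshPowIntegral_one_le hz0)) (sq_nonneg t)
    _ ≤ 10 * (t ^ 2 * exp (-(t / 4))) := by nlinarith [sq_nonneg t]

theorem integrableOn_transform_integrand (hc : 0 ≤ c) (σ : ℝ) :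
    IntegrableOn (fun t => coshPowIntegral 0 (sinhDiv σ t) * exp (-c * t)) (Ioi 0) :=
  integrableOn_coshPowIntegral_zero.mono' (aestronglyMeasurable_transform_integrand c σ)
    (ae_restrict_of_forall_mem measurableSet_Ioi fun _ ht => abs_transform_integrand_le hc ht σ)

theorem integrableOn_transformDeriv_integrand (hc : 0 ≤ c) (σ : ℝ) :
    IntegrableOn (fun t => -(coshPowIntegral 1 (sinhDiv σ t) * sinhDivDeriv σ t) * exp (-c * t))
      (Ioi 0) :=
  ((integrableOn_pow_mul_exp_neg_div 1 two_pos).const_mul 2).mono'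
    (aestronglyMeasurable_transformDeriv_integrand c σ)
    (ae_restrict_of_forall_mem measurableSet_Ioi fun _ ht =>
      abs_transformDeriv_integrand_le hc ht σ)

theorem hasDerivAt_transform_integrand (c : ℝ) {t : ℝ} (ht : 0 < t) (σ : ℝ) :
    HasDerivAt (fun σ => coshPowIntegral 0 (sinhDiv σ t) * exp (-c * t))
      (-(coshPowIntegral 1 (sinhDiv σ t) * sinhDivDeriv σ t) * exp (-c * t)) σ :=
  (((hasDerivAt_coshPowIntegral 0 (sinhDiv_pos ht σ)).comp σ
    (hasDerivAt_sinhDiv t σ)).mul_const _).congr_deriv (by ring)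

theorem hasDerivAt_transformDeriv_integrand (c : ℝ) {t : ℝ} (ht : 0 < t) (σ : ℝ) :
    HasDerivAt (fun σ => -(coshPowIntegral 1 (sinhDiv σ t) * sinhDivDeriv σ t) * exp (-c * t))
      ((coshPowIntegral 2 (sinhDiv σ t) * sinhDivDeriv σ t ^ 2
        - coshPowIntegral 1 (sinhDiv σ t) * sinhDivDeriv2 σ t) * exp (-c * t)) σ :=
  (((((hasDerivAt_coshPowIntegral 1 (sinhDiv_pos ht σ)).comp σ (hasDerivAt_sinhDiv t σ)).mul
    (hasDerivAt_sinhDivDeriv t σ)).neg).mul_const _).congr_deriv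
    (by rw [Function.comp_apply]; ring)

theorem hasDerivAt_transform (hc : 0 ≤ c) (σ : ℝ) :
    HasDerivAt (transform c) (transformDeriv c σ) σ :=
  hasDerivAt_integral_of_forall_abs_deriv_le (aestronglyMeasurable_transform_integrand c)
    (integrableOn_transform_integrand hc σ) (aestronglyMeasurable_transformDeriv_integrand c σ)
    (ae_restrict_of_forall_mem measurableSet_Ioi fun _ ht σ =>
      abs_transformDeriv_integrand_le hc ht σ)
    ((integrableOn_pow_mul_exp_neg_div 1 two_pos).const_mul 2)
    (ae_restrict_of_forall_mem measurableSet_Ioi fun _ ht σ =>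
      hasDerivAt_transform_integrand c ht σ)

theorem hasDerivAt_transformDeriv (hc : 0 ≤ c) (σ : ℝ) :
    HasDerivAt (transformDeriv c) (transformDeriv2 c σ) σ :=
  hasDerivAt_integral_of_forall_abs_deriv_le (aestronglyMeasurable_transformDeriv_integrand c)
    (integrableOn_transformDeriv_integrand hc σ)
    (aestronglyMeasurable_transformDeriv2_integrand c σ)
    (ae_restrict_of_forall_mem measurableSet_Ioi fun _ ht σ =>
      abs_transformDeriv2_integrand_le hc ht σ)
    ((integrableOn_pow_mul_exp_neg_div 2 (by norm_num : (0:ℝ) < 4)).const_mul 10)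
    (ae_restrict_of_forall_mem measurableSet_Ioi fun _ ht σ =>
      hasDerivAt_transformDeriv_integrand c ht σ)

theorem continuous_transformDeriv2 (hc : 0 ≤ c) : Continuous (transformDeriv2 c) :=
  continuous_of_dominated (aestronglyMeasurable_transformDeriv2_integrand c)
    (fun σ => ae_restrict_of_forall_mem measurableSet_Ioi fun _ ht =>
      abs_transformDeriv2_integrand_le hc ht σ)
    ((integrableOn_pow_mul_exp_neg_div 2 (by norm_num : (0:ℝ) < 4)).const_mul 10)
    (ae_restrict_of_forall_mem measurableSet_Ioi fun _ ht =>
      (((continuous_coshPowIntegral_sinhDiv_left 2 ht).mul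
        (by unfold sinhDivDeriv; fun_prop : Continuous _)).sub
      ((continuous_coshPowIntegral_sinhDiv_left 1 ht).mul
        (by unfold sinhDivDeriv2; fun_prop : Continuous _))).mul continuous_const)

theorem contDiff_transform (hc : 0 ≤ c) : ContDiff ℝ 2 (transform c) :=
  contDiff_two_of_hasDerivAt (hasDerivAt_transform hc) (hasDerivAt_transformDeriv hc)
    (continuous_transformDeriv2 hc)

end Transform

theorem transform_zero_right (c : ℝ) :
    transform c 0 = ∫ t in Ioi (0:ℝ), besselK 0 t * exp (-c * t) := by
  simp [transform, sinhDiv_zero_left, besselK_zero_eq]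

theorem transformDeriv_zero_right (c : ℝ) : transformDeriv c 0 = 0 := by
  simp [transformDeriv, sinhDivDeriv_zero_left]

theorem transformDeriv2_zero_right (c : ℝ) :
    transformDeriv2 c 0 = -(1 / 3) * ∫ t in Ioi (0:ℝ), t ^ 3 * besselK 1 t * exp (-c * t) := by
  rw [transformDeriv2, ← integral_const_mul]
  congr 1 with t
  rw [sinhDiv_zero_left, sinhDivDeriv_zero_left, sinhDivDeriv2_zero_left, besselK_one_eq]
  ring

theorem integral_besselK_sinh_eq_transform {x y s : ℝ} (hy : 0 < y) (hs : s ≠ 0) :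
    2 * y * ∫ t in Ioi (0:ℝ),
        besselK 0 (2 * y * t * (sinh (s * t) / (s * t))) * exp (-2 * x * t)
      = transform (x / y) ((2 * y)⁻¹ * s) := by
  have h2y : 0 < 2 * y := by positivity
  have hsub := integral_comp_mul_left_Ioi'
    (fun τ => coshPowIntegral 0 (sinhDiv ((2 * y)⁻¹ * s) τ) * exp (-(x / y) * τ)) 0 h2y
  rw [mul_zero, smul_eq_mul] at hsub
  rw [transform, ← hsub]
  congr 1
  refine setIntegral_congr_fun measurableSet_Ioi fun t ht => ?_
  have hσ : (2 * y)⁻¹ * s * (2 * y * t) = s * t := by field_simp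
  rw [sinhDiv_eq (hσ ▸ mul_ne_zero hs (ne_of_gt ht)), hσ, besselK_zero_eq]
  congr 2
  field_simp

end BesselKSinhc

open BesselKSinhc

theorem stmt_5_general (x y : ℝ) (hx : 0 < x) (hy : 0 < y)
    (F : ℝ → ℝ)
    (hF0 : F 0 = ∫ t in Set.Ioi (0:ℝ), besselK 0 t * Real.exp (-(x/y) * t))
    (hFs : ∀ s : ℝ, s ≠ 0 →
      F s = 2 * y * ∫ t in Set.Ioi (0:ℝ),
        besselK 0 (2 * y * t * (Real.sinh (s*t) / (s*t))) * Real.exp (-2*x*t)) :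
    ContDiff ℝ 2 F ∧ deriv F 0 = 0 ∧
      deriv (deriv F) 0
        = -(1/(12*y^2)) * ∫ t in Set.Ioi (0:ℝ), t^3 * besselK 1 t * Real.exp (-(x/y)*t) := by
  have hc : 0 ≤ x / y := (div_pos hx hy).le
  have hF : F = fun s => transform (x / y) ((2 * y)⁻¹ * s) := by
    ext s
    rcases eq_or_ne s 0 with rfl | hs
    · rw [hF0, mul_zero, transform_zero_right]
    · rw [hFs s hs, integral_besselK_sinh_eq_transform hy hs]
  have hdF : deriv F = fun s => transformDeriv (x / y) ((2 * y)⁻¹ * s) * (2 * y)⁻¹ :=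
    funext fun s => hF ▸
      ((hasDerivAt_transform hc _).comp s (hasDerivAt_const_mul (2 * y)⁻¹)).deriv
  have hd2F : HasDerivAt (deriv F)
      (transformDeriv2 (x / y) ((2 * y)⁻¹ * 0) * (2 * y)⁻¹ * (2 * y)⁻¹) 0 :=
    hdF ▸ ((hasDerivAt_transformDeriv hc _).comp 0 (hasDerivAt_const_mul _)).mul_const _
  refine ⟨hF ▸ (contDiff_transform hc).comp (contDiff_const.mul contDiff_id), ?_, ?_⟩
  · simp [hdF, transformDeriv_zero_right]
  · rw [hd2F.deriv, mul_zero, transformDeriv2_zero_right]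
    generalize (∫ t in Ioi (0:ℝ), t ^ 3 * besselK 1 t * exp (-(x / y) * t)) = I
    field_simp
    ring

theorem stmt_5 (x y : ℝ) (hx : 0 < x) (hy : 0 < y) (hxy : x / y < 1)
    (F : ℝ → ℝ)
    (hF0 : F 0 = ∫ t in Set.Ioi (0:ℝ), besselK 0 t * Real.exp (-(x/y) * t))
    (hFs : ∀ s : ℝ, s ≠ 0 →
      F s = 2 * y * ∫ t in Set.Ioi (0:ℝ),
        besselK 0 (2 * y * t * (Real.sinh (s*t) / (s*t))) * Real.exp (-2*x*t)) :
    ContDiff ℝ 2 F ∧ deriv F 0 = 0 ∧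
      deriv (deriv F) 0
        = -(1/(12*y^2)) * ∫ t in Set.Ioi (0:ℝ), t^3 * besselK 1 t * Real.exp (-(x/y)*t) :=
  stmt_5_general x y hx hy F hF0 hFs
end

section
/- For every x > 0 one has ∫₀ˣ g'(f(t))/t dt = ln(f(x)) − (1/2)·ln(f(x)² − 1); equivalently, exp(∫₀ˣ g'(f(t))/t dt) = f(x)/√(f(x)²−1). -/
open Real Set MeasureTheory

/-- The function `y ↦ π/(√(y²−1) − arccos(1/y))`, a strictly decreasing bijection
from `(1,∞)` onto `(0,∞)`. -/
noncomputable def sigmaF (y : ℝ) : ℝ :=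
  Real.pi / (Real.sqrt (y^2 - 1) - Real.arccos (1/y))

/-!
Substitute `y = f t`, i.e. `t = σ y`. Then `g'(f t) dt / t = g'(y) σ'(y) / σ(y) dy`, and computing
the three derivatives shows that this is `d (logDivSqrt y)`. So `logDivSqrt ∘ f` is an
antiderivative of the integrand on `(0, ∞)`. The integrand is nonnegative, hence integrable, and
`logDivSqrt (f t) → 0` as `t → 0⁺` because `f t → ∞`; the fundamental theorem of calculus then
gives `logDivSqrt (f x)`.
-/

open Filter Topology

theorem intervalIntegral.integral_eq_sub_of_hasDerivAt_of_nonneg_of_tendsto_left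
    {F F' : ℝ → ℝ} {a b Fa : ℝ} (hab : a < b) (hcont : ContinuousOn F (Ioc a b))
    (hderiv : ∀ x ∈ Ioo a b, HasDerivAt F (F' x) x) (hnonneg : ∀ x ∈ Ioo a b, 0 ≤ F' x)
    (ha : Tendsto F (𝓝[>] a) (𝓝 Fa)) :
    ∫ x in a..b, F' x = F b - Fa := by
  classical
  set G := Function.update F a Fa
  have hGcont : ContinuousOn G (Icc a b) := by
    rw [continuousOn_update_iff, Icc_sdiff_left]
    exact ⟨hcont, fun _ => ha.mono_left (nhdsWithin_mono _ Ioc_subset_Ioi_self)⟩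
  have hGderiv : ∀ x ∈ Ioo a b, HasDerivAt G (F' x) x := fun x hx =>
    (hderiv x hx).congr_of_eventuallyEq <| by
      filter_upwards [Ioi_mem_nhds hx.1] with y hy using Function.update_of_ne hy.ne' _ _
  have hint : IntervalIntegrable F' volume a b :=
    (intervalIntegrable_iff_integrableOn_Ioc_of_le hab.le).2
      (integrableOn_deriv_of_nonneg hGcont hGderiv hnonneg)
  simpa [G, hab.ne'] using integral_eq_sub_of_hasDerivAt_of_le hab.le hGcont hGderiv hint

section RightInverse

variable {a : ℝ} {σ f : ℝ → ℝ} (hσ : StrictAntiOn σ (Ioi a)) (hσpos : MapsTo σ (Ioi a) (Ioi 0))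
  (hf : ∀ t, 0 < t → a < f t ∧ σ (f t) = t)
include hσ hf

theorem apply_eq_of_rightInverse {y : ℝ} (hy : a < y) (hσy : 0 < σ y) : f (σ y) = y :=
  hσ.injOn (hf _ hσy).1 hy (hf _ hσy).2

theorem strictAntiOn_of_rightInverse : StrictAntiOn f (Ioi 0) := by
  intro s hs t ht hst
  by_contra! h
  have := hσ.antitoneOn (hf s hs).1 (hf t ht).1 h
  rw [(hf s hs).2, (hf t ht).2] at this
  exact hst.not_ge this

include hσpos

theorem Ioi_subset_image_of_rightInverse : Ioi a ⊆ f '' Ioi 0 := fun y hy =>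
  ⟨σ y, hσpos hy, apply_eq_of_rightInverse hσ hf hy (hσpos hy)⟩

theorem continuousAt_of_rightInverse {t : ℝ} (ht : 0 < t) : ContinuousAt f t := by
  have hmono : MonotoneOn (-f) (Ioi 0) := (strictAntiOn_of_rightInverse hσ hf).antitoneOn.neg
  have himage : (-f) '' Ioi 0 ∈ 𝓝 ((-f) t) := by
    refine mem_of_superset (Iio_mem_nhds (neg_lt_neg (hf t ht).1)) fun y hy => ?_
    obtain ⟨s, hs, hfs⟩ := Ioi_subset_image_of_rightInverse hσ hσpos hf (mem_Ioi.2 (lt_neg.2 hy))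
    exact ⟨s, hs, by simp [hfs]⟩
  simpa using (continuousAt_of_monotoneOn_of_image_mem_nhds hmono (Ioi_mem_nhds ht) himage).neg

theorem tendsto_atTop_of_rightInverse : Tendsto f (𝓝[>] 0) atTop := by
  refine tendsto_atTop.2 fun M => ?_
  obtain ⟨y, hay, hMy⟩ : ∃ y, a < y ∧ M ≤ y := ⟨max (a + 1) M, by simp, le_max_right _ _⟩
  filter_upwards [Ioo_mem_nhdsGT (hσpos hay)] with s hs
  calc M ≤ y := hMy
    _ = f (σ y) := (apply_eq_of_rightInverse hσ hf hay (hσpos hay)).symm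
    _ ≤ f s := (strictAntiOn_of_rightInverse hσ hf).antitoneOn hs.1 (mem_Ioi.2 (hσpos hay)) hs.2.le

theorem hasDerivAt_of_rightInverse {t σ' : ℝ} (ht : 0 < t) (hσ' : HasDerivAt σ σ' (f t))
    (hσ'0 : σ' ≠ 0) : HasDerivAt f σ'⁻¹ t :=
  hσ'.of_local_left_inverse (continuousAt_of_rightInverse hσ hσpos hf ht) hσ'0 <| by
    filter_upwards [Ioi_mem_nhds ht] with s hs using (hf s hs).2

end RightInverse

noncomputable def sigmaDenom (y : ℝ) : ℝ := √(y ^ 2 - 1) - arccos (1 / y)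

noncomputable def logDivSqrt (y : ℝ) : ℝ := log y - 1 / 2 * log (y ^ 2 - 1)

section

variable {y : ℝ}

theorem sq_sub_one_pos (hy : 1 < y) : 0 < y ^ 2 - 1 := by nlinarith

theorem sqrt_sq_sub_one_pos (hy : 1 < y) : 0 < √(y ^ 2 - 1) :=
  sqrt_pos.2 (sq_sub_one_pos hy)

theorem sqrt_one_sub_one_div_sq (hy : 0 < y) : √(1 - 1 / y ^ 2) = √(y ^ 2 - 1) / y := by
  rw [show 1 - 1 / y ^ 2 = (y ^ 2 - 1) / y ^ 2 by field_simp, sqrt_div' _ (by positivity),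
    sqrt_sq hy.le]

theorem hasDerivAt_arccos_one_div (hy : 1 < y) :
    HasDerivAt (fun y => arccos (1 / y)) (1 / (y * √(y ^ 2 - 1))) y := by
  have hy0 : 0 < y := by linarith
  have hinv : HasDerivAt (fun y : ℝ => 1 / y) (-(1 / y ^ 2)) y := by
    simpa only [one_div] using hasDerivAt_inv hy0.ne'
  have harccos := hasDerivAt_arccos (x := 1 / y) (by linarith [one_div_pos.2 hy0])
    ((div_lt_one hy0).2 hy).ne
  refine (harccos.comp y hinv).congr_deriv ?_
  rw [div_pow, one_pow, sqrt_one_sub_one_div_sq hy0]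
  have := sqrt_sq_sub_one_pos hy
  field_simp

theorem hasDerivAt_sqrt_sq_sub_one (hy : 1 < y) :
    HasDerivAt (fun y => √(y ^ 2 - 1)) (y / √(y ^ 2 - 1)) y := by
  have hsq : HasDerivAt (fun y : ℝ => y ^ 2 - 1) (2 * y) y := by
    simpa using (hasDerivAt_pow 2 y).sub_const 1
  refine ((hasDerivAt_sqrt (sq_sub_one_pos hy).ne').comp y hsq).congr_deriv ?_
  have := sqrt_sq_sub_one_pos hy
  field_simp

theorem hasDerivAt_sigmaDenom (hy : 1 < y) :
    HasDerivAt sigmaDenom (√(y ^ 2 - 1) / y) y := by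
  refine ((hasDerivAt_sqrt_sq_sub_one hy).sub (hasDerivAt_arccos_one_div hy)).congr_deriv ?_
  have := sqrt_sq_sub_one_pos hy
  have := sq_sqrt (sq_sub_one_pos hy).le
  field_simp
  linarith

theorem continuousOn_sigmaDenom : ContinuousOn sigmaDenom (Ici 1) := by
  refine (continuous_sqrt.comp (by fun_prop)).continuousOn.sub
    (continuous_arccos.comp_continuousOn (continuousOn_const.div continuousOn_id ?_))
  intro y hy
  exact (zero_lt_one.trans_le hy).ne'

theorem strictMonoOn_sigmaDenom : StrictMonoOn sigmaDenom (Ici 1) := by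
  refine strictMonoOn_of_hasDerivWithinAt_pos (convex_Ici 1) continuousOn_sigmaDenom
    (fun y hy => (hasDerivAt_sigmaDenom (interior_Ici.subset hy)).hasDerivWithinAt) ?_
  intro y hy
  have hy : 1 < y := interior_Ici.subset hy
  exact div_pos (sqrt_sq_sub_one_pos hy) (by linarith)

theorem sigmaDenom_pos (hy : 1 < y) : 0 < sigmaDenom y := by
  simpa [sigmaDenom] using strictMonoOn_sigmaDenom self_mem_Ici hy.le hy

theorem sigmaF_eq_pi_div : sigmaF y = π / sigmaDenom y := rfl

theorem sigmaF_pos (hy : 1 < y) : 0 < sigmaF y :=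
  div_pos pi_pos (sigmaDenom_pos hy)

theorem strictAntiOn_sigmaF : StrictAntiOn sigmaF (Ioi 1) := fun _ ha _ hb hab =>
  div_lt_div_of_pos_left pi_pos (sigmaDenom_pos ha)
    (strictMonoOn_sigmaDenom (Ioi_subset_Ici_self ha) (Ioi_subset_Ici_self hb) hab)

theorem hasDerivAt_sigmaF (hy : 1 < y) :
    HasDerivAt sigmaF (-(π * (√(y ^ 2 - 1) / y)) / sigmaDenom y ^ 2) y := by
  refine ((hasDerivAt_const y π).div (hasDerivAt_sigmaDenom hy)
    (sigmaDenom_pos hy).ne').congr_deriv ?_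
  ring

theorem hasDerivAt_gFun_s19 (hy : 1 < y) :
    HasDerivAt gFun (sigmaDenom y / √(y ^ 2 - 1) ^ 3) y := by
  have hy0 : 0 < y := by linarith
  have hs := sqrt_sq_sub_one_pos hy
  have hsub : HasDerivAt (fun y : ℝ => 1 - 1 / y ^ 2) (2 / y ^ 3) y := by
    have := ((hasDerivAt_pow 2 y).inv (by positivity)).const_sub 1
    simp only [one_div]
    refine this.congr_deriv ?_
    field_simp
    ring
  have hden : HasDerivAt (fun y => √(1 - 1 / y ^ 2)) (1 / (y ^ 2 * √(y ^ 2 - 1))) y := by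
    have hpos : 0 < 1 - 1 / y ^ 2 := by
      rw [sub_pos, div_lt_one (by positivity)]
      nlinarith
    refine ((hasDerivAt_sqrt hpos.ne').comp y hsub).congr_deriv ?_
    rw [sqrt_one_sub_one_div_sq hy0]
    field_simp
  have hden0 : √(1 - 1 / y ^ 2) ≠ 0 := by
    rw [sqrt_one_sub_one_div_sq hy0]; positivity
  refine ((hasDerivAt_arccos_one_div hy).div hden hden0).congr_deriv ?_
  rw [sqrt_one_sub_one_div_sq hy0, sigmaDenom]
  field_simp

theorem deriv_sigmaF_neg (hy : 1 < y) : deriv sigmaF y < 0 := by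
  rw [(hasDerivAt_sigmaF hy).deriv]
  have := sqrt_sq_sub_one_pos hy
  have := sigmaDenom_pos hy
  have : 0 < y := by linarith
  have := pi_pos
  exact div_neg_of_neg_of_pos (neg_neg_of_pos (by positivity)) (by positivity)

theorem deriv_gFun_pos (hy : 1 < y) : 0 < deriv gFun y := by
  rw [(hasDerivAt_gFun_s19 hy).deriv]
  exact div_pos (sigmaDenom_pos hy) (pow_pos (sqrt_sq_sub_one_pos hy) 3)

theorem hasDerivAt_logDivSqrt (hy : 1 < y) :
    HasDerivAt logDivSqrt (-1 / (y * (y ^ 2 - 1))) y := by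
  have hy0 : 0 < y := by linarith
  have hsq : HasDerivAt (fun y : ℝ => y ^ 2 - 1) (2 * y) y := by
    simpa using (hasDerivAt_pow 2 y).sub_const 1
  refine ((hasDerivAt_log hy0.ne').sub
    ((hsq.log (sq_sub_one_pos hy).ne').const_mul (1 / 2))).congr_deriv ?_
  have := sq_sub_one_pos hy
  field_simp
  ring

theorem deriv_logDivSqrt (hy : 1 < y) :
    deriv logDivSqrt y = deriv gFun y * deriv sigmaF y / sigmaF y := by
  rw [(hasDerivAt_logDivSqrt hy).deriv, (hasDerivAt_gFun_s19 hy).deriv, (hasDerivAt_sigmaF hy).deriv,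
    sigmaF_eq_pi_div]
  have := sqrt_sq_sub_one_pos hy
  have := sigmaDenom_pos hy
  have : 0 < y := by linarith
  have := pi_pos
  field_simp
  rw [sq_sqrt (sq_sub_one_pos hy).le, div_self (sq_sub_one_pos hy).ne']

theorem logDivSqrt_eq_neg_half_log (hy : 1 < y) :
    logDivSqrt y = -(1 / 2) * log (1 - 1 / y ^ 2) := by
  have hy0 : 0 < y := by linarith
  rw [logDivSqrt, show 1 - 1 / y ^ 2 = (y ^ 2 - 1) / y ^ 2 by field_simp,
    log_div (sq_sub_one_pos hy).ne' (by positivity), log_pow]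
  push_cast
  ring

theorem tendsto_logDivSqrt_atTop : Tendsto logDivSqrt atTop (𝓝 0) := by
  have hlim : Tendsto (fun y : ℝ => 1 - 1 / y ^ 2) atTop (𝓝 1) := by
    simpa using
      tendsto_const_nhds.sub ((tendsto_pow_atTop (α := ℝ) two_ne_zero).inv_tendsto_atTop)
  have := ((continuousAt_log one_ne_zero).tendsto.comp hlim).const_mul (-(1 / 2) : ℝ)
  rw [log_one, mul_zero] at this
  refine this.congr' ?_
  filter_upwards [eventually_gt_atTop 1] with y hy using (logDivSqrt_eq_neg_half_log hy).symm

theorem exp_logDivSqrt (hy : 1 < y) : exp (logDivSqrt y) = y / √(y ^ 2 - 1) := by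
  rw [logDivSqrt, exp_sub, exp_log (by linarith), sqrt_eq_rpow,
    rpow_def_of_pos (sq_sub_one_pos hy), mul_comm]

end

theorem hasDerivAt_logDivSqrt_comp {f : ℝ → ℝ} (hf : ∀ t, 0 < t → 1 < f t ∧ sigmaF (f t) = t)
    {t : ℝ} (ht : 0 < t) : HasDerivAt (fun t => logDivSqrt (f t)) (deriv gFun (f t) / t) t := by
  obtain ⟨hy, hσt⟩ := hf t ht
  have hσ' := (hasDerivAt_sigmaF hy).differentiableAt.hasDerivAt
  have hf' := hasDerivAt_of_rightInverse strictAntiOn_sigmaF (fun _ => sigmaF_pos) hf ht hσ'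
    (deriv_sigmaF_neg hy).ne
  refine ((hasDerivAt_logDivSqrt hy).differentiableAt.hasDerivAt.comp t hf').congr_deriv ?_
  rw [deriv_logDivSqrt hy, hσt]
  field_simp [(deriv_sigmaF_neg hy).ne]

theorem stmt_19 (x : ℝ) (hx : 0 < x)
    (f : ℝ → ℝ) (hf : ∀ t : ℝ, 0 < t → 1 < f t ∧ sigmaF (f t) = t) :
    (∫ t in (0:ℝ)..x, deriv gFun (f t) / t)
        = Real.log (f x) - (1/2) * Real.log ((f x)^2 - 1) ∧
    Real.exp (∫ t in (0:ℝ)..x, deriv gFun (f t) / t)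
        = f x / Real.sqrt ((f x)^2 - 1) := by
  have hint : ∫ t in (0:ℝ)..x, deriv gFun (f t) / t = logDivSqrt (f x) := by
    simpa using intervalIntegral.integral_eq_sub_of_hasDerivAt_of_nonneg_of_tendsto_left hx
      (fun t ht => (hasDerivAt_logDivSqrt_comp hf ht.1).continuousAt.continuousWithinAt)
      (fun t ht => hasDerivAt_logDivSqrt_comp hf ht.1)
      (fun t ht => div_nonneg (deriv_gFun_pos (hf t ht.1).1).le ht.1.le)
      (tendsto_logDivSqrt_atTop.comp
        (tendsto_atTop_of_rightInverse strictAntiOn_sigmaF (fun _ => sigmaF_pos) hf))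
  exact ⟨hint, by rw [hint, exp_logDivSqrt (hf x hx).1]⟩
end
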